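/- arXiv:0708.2295 — 7 statements merged into one kernel-verified Lean document; each statement's English description precedes it below -/
import Mathlib

section
/- Let G be a finite abelian group of order n > 1. Then β(G) ≥ 2/7; equivalently, G has a product-free subset S with 7·#S ≥ 2n. -/
/-- A subset `S` of a group is product-free if there are no `a, b, c ∈ S`
(not necessarily distinct) with `a * b = c`. -/
def IsProductFree {G : Type*} [Group G] (S : Finset G) : Prop :=
  ∀ a ∈ S, ∀ b ∈ S, ∀ c ∈ S, a * b ≠ c

private lemma aux_middle_third (p : ℕ) (hp2 : 2 ≤ p) (hp4 : p ≠ 4) :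
    2 * p ≤ 7 * (2*p/3 + 1 - (p/3 + 1)) := by
  obtain ⟨q, rfl | rfl | rfl⟩ : ∃ q, p = 3*q ∨ p = 3*q+1 ∨ p = 3*q+2 := ⟨p/3, by omega⟩
  all_goals omega

/-- For a finite abelian group `G` of order `n > 1`, there is a product-free
subset `S` with `7 * #S ≥ 2 * n`, i.e. `β(G) ≥ 2/7`. -/
theorem abelian_product_free_two_sevenths (G : Type*) [CommGroup G] [Fintype G]
    (hn : 1 < Fintype.card G) :
    ∃ S : Finset G, IsProductFree S ∧ 2 * Fintype.card G ≤ 7 * S.card := by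
  classical
  obtain ⟨ι, _, n, h1, ⟨e⟩⟩ := CommGroup.equiv_prod_multiplicative_zmod_of_finite G
  have hne : Nonempty ι := by
    by_contra h
    rw [not_nonempty_iff] at h
    have : Fintype.card G = 1 := by
      rw [Fintype.card_eq_one_iff]
      exact ⟨1, fun x => e.injective (Subsingleton.elim _ _)⟩
    omega
  obtain ⟨i0⟩ := hne
  have hm : 1 < n i0 := h1 i0
  set p := (n i0).minFac with hpdef
  have hp : p.Prime := Nat.minFac_prime (by omega)
  haveI : NeZero (n i0) := ⟨by omega⟩
  haveI : Fact p.Prime := ⟨hp⟩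
  -- the homomorphism onto Multiplicative (ZMod p)
  let c : Multiplicative (ZMod (n i0)) →* Multiplicative (ZMod p) :=
    AddMonoidHom.toMultiplicative
      (ZMod.castHom (Nat.minFac_dvd (n i0)) (ZMod p)).toAddMonoidHom
  let ψ : G →* Multiplicative (ZMod p) :=
    c.comp ((Pi.evalMonoidHom (fun i => Multiplicative (ZMod (n i))) i0).comp e.toMonoidHom)
  have hsurj : Function.Surjective ψ := by
    intro y
    obtain ⟨k, hk⟩ := ZMod.natCast_zmod_surjective (n := p) y.toAdd
    refine ⟨e.symm (Pi.mulSingle i0 (Multiplicative.ofAdd ((k : ZMod (n i0))))), ?_⟩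
    have h2 : ψ (e.symm (Pi.mulSingle i0 (Multiplicative.ofAdd ((k : ZMod (n i0))))))
        = c (Multiplicative.ofAdd ((k : ZMod (n i0)))) := by
      simp only [ψ, MonoidHom.comp_apply, MulEquiv.coe_toMonoidHom, MulEquiv.apply_symm_apply,
        Pi.evalMonoidHom_apply, Pi.mulSingle_eq_same]
    rw [h2]
    simp only [c, AddMonoidHom.toMultiplicative_apply_apply, RingHom.toAddMonoidHom_eq_coe,
      AddMonoidHom.coe_coe, toAdd_ofAdd, map_natCast, hk, ofAdd_toAdd]
  -- the sum-free middle third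
  let T : Finset (Multiplicative (ZMod p)) :=
    Finset.univ.filter (fun x => p < 3 * x.toAdd.val ∧ 3 * x.toAdd.val ≤ 2 * p)
  have hTfree : ∀ x ∈ T, ∀ y ∈ T, ∀ z ∈ T, x * y ≠ z := by
    intro x hx y hy z hz hxyz
    simp only [T, Finset.mem_filter] at hx hy hz
    have hval : z.toAdd.val = (x.toAdd.val + y.toAdd.val) % p := by
      rw [← hxyz]; exact ZMod.val_add _ _
    have hx' := ZMod.val_lt x.toAdd
    have hy' := ZMod.val_lt y.toAdd
    rcases lt_or_ge (x.toAdd.val + y.toAdd.val) p with h | h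
    · rw [Nat.mod_eq_of_lt h] at hval; omega
    · rw [Nat.mod_eq_sub_mod h, Nat.mod_eq_of_lt (by omega)] at hval; omega
  -- cardinality of T
  have hTcard : 2 * p ≤ 7 * T.card := by
    have : T.card = (Finset.Ico (p/3 + 1) (2*p/3 + 1)).card := by
      apply Finset.card_bij (fun x _ => x.toAdd.val)
      · intro x hx
        simp only [T, Finset.mem_filter] at hx
        have := ZMod.val_lt x.toAdd
        simp only [Finset.mem_Ico]
        omega
      · intro x _ y _ hxy
        exact Multiplicative.toAdd.injective (ZMod.val_injective _ hxy)
      · intro k hk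
        simp only [Finset.mem_Ico] at hk
        have hp2 := hp.two_le
        have hkp : k < p := by omega
        refine ⟨Multiplicative.ofAdd ((k : ZMod p)), ?_, ?_⟩
        · simp only [T, Finset.mem_filter, toAdd_ofAdd, ZMod.val_cast_of_lt hkp]
          exact ⟨Finset.mem_univ _, by omega, by omega⟩
        · simp [ZMod.val_cast_of_lt hkp]
    rw [this, Nat.card_Ico]
    have hp2 := hp.two_le
    have hp4 : p ≠ 4 := by intro h; rw [h] at hp; norm_num at hp
    exact aux_middle_third p hp2 hp4
  -- the product-free set in G
  refine ⟨Finset.univ.filter (fun g => ψ g ∈ T), ?_, ?_⟩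
  · intro a ha b hb c hc habc
    simp only [Finset.mem_filter] at ha hb hc
    exact hTfree _ ha.2 _ hb.2 _ hc.2 (by rw [← map_mul, habc])
  · -- counting via fibers
    set c0 := (Finset.univ.filter (fun g => ψ g = 1)).card with hc0
    have hfib : ∀ t : Multiplicative (ZMod p),
        (Finset.univ.filter (fun g => ψ g = t)).card = c0 :=
      fun t => MonoidHom.card_fiber_eq_of_mem_range ψ (hsurj t) (hsurj 1)
    have hG : Fintype.card G = p * c0 := by
      have := Finset.card_eq_sum_card_fiberwise
        (f := fun g : G => ψ g) (s := Finset.univ) (t := Finset.univ)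
        (fun x _ => Finset.mem_univ _)
      rw [Finset.card_univ] at this
      rw [this, Finset.sum_congr rfl (fun t _ => hfib t), Finset.sum_const, smul_eq_mul,
        Finset.card_univ]
      congr 1
      simp [ZMod.card]
    have hS : (Finset.univ.filter (fun g => ψ g ∈ T)).card = T.card * c0 := by
      have := Finset.card_eq_sum_card_fiberwise
        (f := fun g : G => ψ g) (s := Finset.univ.filter (fun g => ψ g ∈ T)) (t := T)
        (fun x hx => (Finset.mem_filter.mp hx).2)
      rw [this, Finset.sum_congr rfl (fun t ht => ?_), Finset.sum_const, smul_eq_mul]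
      rw [← hfib t]
      congr 1
      ext g
      simp only [Finset.mem_filter, Finset.mem_univ, true_and, and_iff_right_iff_imp]
      rintro rfl
      exact ht
    rw [hS, hG]
    calc 2 * (p * c0) = (2 * p) * c0 := by ring
    _ ≤ (7 * T.card) * c0 := Nat.mul_le_mul_right _ hTcard
    _ = 7 * (T.card * c0) := by ring
end

section
/- (Babai–Sós) Let G be a finite group of order n acting transitively on a finite set X with #X = m > 1, and let x₁, x₂ be distinct elements of X. Then the set S = {g ∈ G : g·x₁ = x₂} is product-free and satisfies m·#S = n. Consequently β(G) ≥ 1/m. -/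
/-- `α(G)`: the largest cardinality of a product-free subset of `G`. -/
noncomputable def alphaPF (G : Type*) [Group G] [Fintype G] : ℕ :=
  sSup {k | ∃ S : Finset G, IsProductFree S ∧ S.card = k}

lemma fiber_card_eq {G X : Type*} [Group G] [Fintype G] [Fintype X] [DecidableEq X]
    [MulAction G X] [MulAction.IsPretransitive G X] (x₁ : X) (x y : X) :
    (Finset.univ.filter (fun g : G => g • x₁ = x)).card
      = (Finset.univ.filter (fun g : G => g • x₁ = y)).card := by
  obtain ⟨h, hh⟩ := MulAction.exists_smul_eq G x y
  apply Finset.card_bij (fun g _ => h * g)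
  · intro g hg
    simp only [Finset.mem_filter, Finset.mem_univ, true_and] at hg ⊢
    rw [mul_smul, hg, hh]
  · intro a ha b hb hab
    exact mul_left_cancel hab
  · intro b hb
    simp only [Finset.mem_filter, Finset.mem_univ, true_and] at hb
    refine ⟨h⁻¹ * b, ?_, by group⟩
    simp only [Finset.mem_filter, Finset.mem_univ, true_and, mul_smul, hb]
    rw [inv_smul_eq_iff, hh]

/-- Babai–Sós: if a finite group `G` of order `n` acts transitively on a set
`X` of size `m > 1` and `x₁ ≠ x₂` in `X`, then `S = {g : g • x₁ = x₂}` is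
product-free with `m * #S = n`; consequently `β(G) ≥ 1/m`. -/
theorem babai_sos {G X : Type*} [Group G] [Fintype G] [Fintype X] [DecidableEq X]
    [MulAction G X] [MulAction.IsPretransitive G X] (hm : 1 < Fintype.card X)
    (x₁ x₂ : X) (hx : x₁ ≠ x₂) :
    IsProductFree (Finset.univ.filter (fun g : G => g • x₁ = x₂)) ∧
    Fintype.card X * (Finset.univ.filter (fun g : G => g • x₁ = x₂)).card
      = Fintype.card G ∧
    Fintype.card G ≤ Fintype.card X * alphaPF G := by
  set S := Finset.univ.filter (fun g : G => g • x₁ = x₂) with hS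
  have hpf : IsProductFree S := by
    intro a ha b hb c hc habc
    simp only [hS, Finset.mem_filter, Finset.mem_univ, true_and] at ha hb hc
    apply hx
    have h1 : a • x₂ = x₂ := by
      calc a • x₂ = (a * b) • x₁ := by rw [← hb, mul_smul]
        _ = x₂ := by rw [habc, hc]
    have := ha.trans h1.symm
    exact smul_left_cancel a this
  have hcard : Fintype.card X * S.card = Fintype.card G := by
    have h1 : (Finset.univ : Finset G).card
        = ∑ x : X, (Finset.univ.filter (fun g : G => g • x₁ = x)).card := by
      exact Finset.card_eq_sum_card_fiberwise (fun g _ => Finset.mem_univ _)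
    rw [← Finset.card_univ (α := G), h1]
    rw [Finset.sum_congr rfl (fun x _ => fiber_card_eq x₁ x x₂)]
    rw [Finset.sum_const, Finset.card_univ, smul_eq_mul]
  refine ⟨hpf, hcard, ?_⟩
  have hle : S.card ≤ alphaPF G := by
    apply le_csSup
    · exact ⟨Fintype.card G, fun k ⟨T, _, hT⟩ => hT ▸ Finset.card_le_univ T⟩
    · exact ⟨S, hpf, rfl⟩
  calc Fintype.card G = Fintype.card X * S.card := hcard.symm
    _ ≤ Fintype.card X * alphaPF G := Nat.mul_le_mul_left _ hle
end

section
/- Let G be a finite group of order n acting transitively on a finite set X with #X = m > 2, and let k be an integer with 1 ≤ k ≤ m − 1. Then α(G) ≥ k·n/m − k³·n/(m−2)² (as real numbers). -/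
/-!
Fix `x₀ ∈ X` and a `k`-subset `T ⊆ X`. The set of `g` with `g • x₀ ∈ T` and `g • T` disjoint
from `T` is product-free: for `a`, `b` in it, `(a * b) • x₀ = a • (b • x₀)` lies in `a • T`,
which misses `T`. It contains every `g` with `g • x₀ ∈ T` except those for which some triple
`{g • x₀, y, g • y}` lies in `T`. Average over all `k`-subsets `T`: the `g` with `g • x₀ ∈ T`
contribute `n k / m`, and a given set of `j` points lies in `T` with probability
`k^(j) / m^(j)` (falling factorials). Degenerate triples are rare: at most `3 n` pairs `(g, y)`
give two points and `n / m` give one, by orbit–stabilizer. With `k³ = k^(3) + 3 k^(2) + k`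
the bad `g` contribute at most `n k³ / (m - 2)²`, and some `T` is at least as good as the average.
-/

open Finset Pointwise

theorem card_le_alphaPF {G : Type*} [Group G] [Fintype G] {S : Finset G} (hS : IsProductFree S) :
    #S ≤ alphaPF G :=
  le_csSup ⟨Fintype.card G, by rintro _ ⟨S', -, rfl⟩; exact card_le_univ S'⟩ ⟨S, hS, rfl⟩

namespace Nat

theorem cast_descFactorial_three (S : Type*) [CommRing S] (a : ℕ) :
    (a.descFactorial 3 : S) = a * (a - 1) * (a - 2) := by
  rw [← descPochhammer_eval_eq_descFactorial]
  simp [descPochhammer_succ_right, Polynomial.eval_mul]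

end Nat

noncomputable def supersetCount (m k j : ℕ) : ℝ :=
  m.choose k * k.descFactorial j / m.descFactorial j

section Superset

variable {α : Type*} [DecidableEq α] {P s : Finset α}

theorem card_filter_powersetCard_superset_mul (k : ℕ) (hP : P ⊆ s) :
    #{T ∈ s.powersetCard k | P ⊆ T} * (#s).descFactorial #P
      = (#s).choose k * k.descFactorial #P := by
  by_cases hk : #P ≤ k
  · rw [card_filter_powersetCard_subset P s k hP hk, Nat.descFactorial_eq_factorial_mul_choose,
      Nat.descFactorial_eq_factorial_mul_choose, mul_left_comm ((#s).choose k), Nat.choose_mul hk]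
    ring
  · have hempty : #{T ∈ s.powersetCard k | P ⊆ T} = 0 :=
      card_eq_zero.2 <| filter_eq_empty_iff.2 fun T hT hPT =>
        hk ((card_le_card hPT).trans (mem_powersetCard.1 hT).2.le)
    rw [hempty, (Nat.descFactorial_eq_zero_iff_lt (n := k)).2 (by omega), zero_mul, mul_zero]

theorem card_filter_powersetCard_superset (k : ℕ) (hP : P ⊆ s) :
    (#{T ∈ s.powersetCard k | P ⊆ T} : ℝ) = supersetCount #s k #P := by
  have hpos : 0 < (#s).descFactorial #P := Nat.descFactorial_pos.2 (card_le_card hP)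
  rw [supersetCount, eq_div_iff (by positivity)]
  exact_mod_cast card_filter_powersetCard_superset_mul k hP

end Superset

theorem supersetCount_one (m k : ℕ) : supersetCount m k 1 = m.choose k * k / m := by
  simp [supersetCount]

theorem supersetCount_nonneg (m k j : ℕ) : 0 ≤ supersetCount m k j := by
  unfold supersetCount
  positivity

theorem supersetCount_three_two_one_le {m : ℕ} (hm : 3 ≤ m) (k : ℕ) :
    m * supersetCount m k 3 + 3 * supersetCount m k 2 + supersetCount m k 1 / m
      ≤ m.choose k * k ^ 3 / ((m : ℝ) - 2) ^ 2 := by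
  have hm' : (3 : ℝ) ≤ m := by exact_mod_cast hm
  have hsq : 0 < ((m : ℝ) - 2) ^ 2 := by nlinarith
  set N : ℝ := (m.choose k : ℝ)
  have stirling : (k.descFactorial 3 : ℝ) + 3 * k.descFactorial 2 + k = (k : ℝ) ^ 3 := by
    rw [Nat.cast_descFactorial_three, Nat.cast_descFactorial_two]
    ring
  simp only [supersetCount, Nat.cast_descFactorial_three ℝ m,
    Nat.cast_descFactorial_two ℝ m, Nat.descFactorial_one]
  have hterm3 : m * (N * k.descFactorial 3 / (m * (m - 1) * (m - 2)))
      ≤ N * k.descFactorial 3 / ((m : ℝ) - 2) ^ 2 := by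
    rw [show (m : ℝ) * (N * k.descFactorial 3 / (m * (m - 1) * (m - 2)))
        = N * k.descFactorial 3 / ((m - 1) * (m - 2)) by field_simp]
    gcongr
    nlinarith
  have hterm2 : N * k.descFactorial 2 / (m * (m - 1)) ≤ N * k.descFactorial 2 / ((m : ℝ) - 2) ^ 2 := by
    gcongr
    nlinarith
  have hterm1 : N * k / m / m ≤ N * k / ((m : ℝ) - 2) ^ 2 := by
    rw [div_div]
    gcongr
    nlinarith
  calc _ ≤ N * k.descFactorial 3 / ((m : ℝ) - 2) ^ 2
        + 3 * (N * k.descFactorial 2 / ((m : ℝ) - 2) ^ 2) + N * k / ((m : ℝ) - 2) ^ 2 := by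
        gcongr
    _ = N * k ^ 3 / ((m : ℝ) - 2) ^ 2 := by
        rw [← stirling]
        ring

theorem card_filter_snd_eq {α β : Type*} [Fintype α] [Fintype β] [DecidableEq β] (f : α → β) :
    #{p : α × β | p.2 = f p.1} = Fintype.card α := by
  rw [card_filter, Fintype.sum_prod_type]
  simp

section Action

variable {G X : Type*} [Group G] [MulAction G X] [DecidableEq X]

theorem card_triple_eq_three {g : G} {x₀ y : X} (h : ¬(y = x₀ ∨ y = g • x₀ ∨ g • y = y)) :
    #({g • x₀, y, g • y} : Finset X) = 3 := by
  obtain ⟨hy, hgy, hfix⟩ := not_or.1 h |>.imp_right not_or.1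
  exact card_eq_three.2 ⟨_, _, _, Ne.symm hgy, fun e => hy (smul_left_cancel g e).symm,
    Ne.symm hfix, rfl⟩

theorem two_le_card_triple {g : G} {x₀ y : X} (h : ¬(g • x₀ = x₀ ∧ y = x₀)) :
    2 ≤ #({g • x₀, y, g • y} : Finset X) := by
  by_contra! hlt
  have hall := card_le_one.1 (Nat.le_of_lt_succ hlt)
  have hy : y = g • x₀ := hall _ (by simp) _ (by simp)
  have hx : y = x₀ := smul_left_cancel g (hall _ (by simp) _ (by simp))
  exact h ⟨hy ▸ hx, hx⟩

theorem card_filter_powersetCard_triple_le [Fintype X] (k : ℕ) (g : G) (x₀ y : X) :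
    (#{T ∈ (univ : Finset X).powersetCard k | {g • x₀, y, g • y} ⊆ T} : ℝ)
      ≤ supersetCount (Fintype.card X) k 3
        + (if y = x₀ ∨ y = g • x₀ ∨ g • y = y then supersetCount (Fintype.card X) k 2 else 0)
        + (if g • x₀ = x₀ ∧ y = x₀ then supersetCount (Fintype.card X) k 1 else 0) := by
  rw [card_filter_powersetCard_superset k (subset_univ _), card_univ]
  have hle : #({g • x₀, y, g • y} : Finset X) ≤ 3 := card_le_three
  have hpos : 0 < #({g • x₀, y, g • y} : Finset X) := card_pos.2 (insert_nonempty _ _)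
  have hw := supersetCount_nonneg (Fintype.card X) k
  by_cases hdeg : y = x₀ ∨ y = g • x₀ ∨ g • y = y
  · rw [if_pos hdeg]
    by_cases hbase : g • x₀ = x₀ ∧ y = x₀
    · rw [if_pos hbase]
      interval_cases #({g • x₀, y, g • y} : Finset X) <;> linarith [hw 1, hw 2, hw 3]
    · rw [if_neg hbase, add_zero]
      have h2 := two_le_card_triple hbase
      interval_cases #({g • x₀, y, g • y} : Finset X) <;> linarith [hw 2, hw 3]
  · rw [if_neg hdeg, if_neg fun hbase => hdeg (Or.inl hbase.2), card_triple_eq_three hdeg]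
    simp

variable (G)

def disjointMovers [Fintype G] (x₀ : X) (T : Finset X) : Finset G :=
  {g : G | g • x₀ ∈ T ∧ Disjoint (g • T) T}

theorem isProductFree_disjointMovers [Fintype G] (x₀ : X) (T : Finset X) :
    IsProductFree (disjointMovers G x₀ T) := by
  intro a ha b hb c hc habc
  simp only [disjointMovers, mem_filter_univ] at ha hb hc
  refine disjoint_left.1 ha.2 (smul_mem_smul_finset hb.1) ?_
  rw [← mul_smul, habc]
  exact hc.1

theorem card_filter_smul_mem_le [Fintype G] [Fintype X] (x₀ : X) (T : Finset X) :
    #{g : G | g • x₀ ∈ T}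
      ≤ #(disjointMovers G x₀ T) + #{p : G × X | {p.1 • x₀, p.2, p.1 • p.2} ⊆ T} := by
  rw [← card_filter_add_card_filter_not (fun g : G => Disjoint (g • T) T), filter_filter]
  refine add_le_add le_rfl (card_le_card_of_surjOn Prod.fst ?_)
  intro g hg
  simp only [coe_filter, mem_filter_univ, not_disjoint_iff, mem_smul_finset] at hg
  obtain ⟨hgx, _, ⟨y, hy, rfl⟩, hgy⟩ := hg
  exact ⟨(g, y), by simp [insert_subset_iff, hgx, hy, hgy], rfl⟩

theorem card_mul_card_filter_smul_eq_self [Fintype G] [Fintype X] [MulAction.IsPretransitive G X]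
    (x : X) : Fintype.card X * #{g : G | g • x = x} = Fintype.card G := by
  have h := (MulAction.stabilizer G x).index_mul_card
  simp only [MulAction.index_stabilizer_of_transitive, Nat.card_eq_fintype_card] at h
  rw [← h, Fintype.card_subtype]
  rfl

theorem card_filter_smul_eq_self_prod [Fintype G] [Fintype X] [Nonempty X]
    [MulAction.IsPretransitive G X] :
    #{p : G × X | p.1 • p.2 = p.2} = Fintype.card G := by
  refine Nat.eq_of_mul_eq_mul_left (Fintype.card_pos (α := X)) ?_
  rw [card_filter, Fintype.sum_prod_type, sum_comm]
  simp only [← card_filter, mul_sum, card_mul_card_filter_smul_eq_self, sum_const, card_univ,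
    smul_eq_mul]

theorem card_filter_degenerate_le [Fintype G] [Fintype X] [MulAction.IsPretransitive G X] (x₀ : X) :
    #{p : G × X | p.2 = x₀ ∨ p.2 = p.1 • x₀ ∨ p.1 • p.2 = p.2} ≤ 3 * Fintype.card G := by
  classical
  have : Nonempty X := ⟨x₀⟩
  rw [filter_or, filter_or]
  refine (card_union_le _ _).trans ?_
  grw [card_union_le, card_filter_snd_eq (fun _ => x₀), card_filter_snd_eq (· • x₀),
    card_filter_smul_eq_self_prod]
  omega

theorem card_filter_smul_eq_self_and_snd_eq [Fintype G] [Fintype X] (x₀ : X) :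
    #{p : G × X | p.1 • x₀ = x₀ ∧ p.2 = x₀} = #{g : G | g • x₀ = x₀} := by
  rw [card_filter, Fintype.sum_prod_type, card_filter]
  refine sum_congr rfl fun g _ => ?_
  split_ifs with h <;> simp [h]

theorem sum_card_filter_smul_mem [Fintype G] [Fintype X] (x₀ : X) (k : ℕ) :
    ∑ T ∈ (univ : Finset X).powersetCard k, (#{g : G | g • x₀ ∈ T} : ℝ)
      = Fintype.card G * supersetCount (Fintype.card X) k 1 := by
  calc ∑ T ∈ (univ : Finset X).powersetCard k, (#{g : G | g • x₀ ∈ T} : ℝ)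
      = ∑ g : G, (#{T ∈ (univ : Finset X).powersetCard k | {g • x₀} ⊆ T} : ℝ) := by
        simp_rw [singleton_subset_iff]
        exact_mod_cast sum_card_bipartiteAbove_eq_sum_card_bipartiteBelow
          (fun (T : Finset X) (g : G) => g • x₀ ∈ T)
    _ = Fintype.card G * supersetCount (Fintype.card X) k 1 := by
        simp only [card_filter_powersetCard_superset _ (subset_univ _), card_singleton, card_univ,
          sum_const, nsmul_eq_mul]

theorem sum_card_filter_triple_subset_le [Fintype G] [Fintype X] [MulAction.IsPretransitive G X]
    (x₀ : X) (k : ℕ) :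
    ∑ T ∈ (univ : Finset X).powersetCard k, (#{p : G × X | {p.1 • x₀, p.2, p.1 • p.2} ⊆ T} : ℝ)
      ≤ Fintype.card G * (Fintype.card X * supersetCount (Fintype.card X) k 3
          + 3 * supersetCount (Fintype.card X) k 2
          + supersetCount (Fintype.card X) k 1 / Fintype.card X) := by
  set m := Fintype.card X
  set n := Fintype.card G
  set w := supersetCount m k
  have hdeg : (#{p : G × X | p.2 = x₀ ∨ p.2 = p.1 • x₀ ∨ p.1 • p.2 = p.2} : ℝ) ≤ 3 * n := by
    exact_mod_cast card_filter_degenerate_le G x₀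
  have hbase : (m : ℝ) * #{p : G × X | p.1 • x₀ = x₀ ∧ p.2 = x₀} = n := by
    rw [card_filter_smul_eq_self_and_snd_eq]
    exact_mod_cast card_mul_card_filter_smul_eq_self G x₀
  have hm : (m : ℝ) ≠ 0 := by
    have : 0 < m := Fintype.card_pos_iff.2 ⟨x₀⟩
    positivity
  calc ∑ T ∈ (univ : Finset X).powersetCard k, (#{p : G × X | {p.1 • x₀, p.2, p.1 • p.2} ⊆ T} : ℝ)
      = ∑ p : G × X,
          (#{T ∈ (univ : Finset X).powersetCard k | {p.1 • x₀, p.2, p.1 • p.2} ⊆ T} : ℝ) := by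
        exact_mod_cast sum_card_bipartiteAbove_eq_sum_card_bipartiteBelow
          (fun (T : Finset X) (p : G × X) => {p.1 • x₀, p.2, p.1 • p.2} ⊆ T)
    _ ≤ ∑ p : G × X, (w 3 + (if p.2 = x₀ ∨ p.2 = p.1 • x₀ ∨ p.1 • p.2 = p.2 then w 2 else 0)
          + (if p.1 • x₀ = x₀ ∧ p.2 = x₀ then w 1 else 0)) :=
        sum_le_sum fun p _ => card_filter_powersetCard_triple_le k p.1 x₀ p.2
    _ = n * m * w 3 + #{p : G × X | p.2 = x₀ ∨ p.2 = p.1 • x₀ ∨ p.1 • p.2 = p.2} * w 2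
          + #{p : G × X | p.1 • x₀ = x₀ ∧ p.2 = x₀} * w 1 := by
        simp only [sum_add_distrib, sum_ite, sum_const, card_univ, Fintype.card_prod,
          nsmul_eq_mul]
        push_cast
        ring
    _ ≤ n * m * w 3 + 3 * n * w 2 + #{p : G × X | p.1 • x₀ = x₀ ∧ p.2 = x₀} * w 1 := by
        gcongr
        exact supersetCount_nonneg m k 2
    _ = n * (m * w 3 + 3 * w 2 + w 1 / m) := by
        rw [← hbase]
        field_simp

theorem le_sum_card_disjointMovers [Fintype G] [Fintype X] [MulAction.IsPretransitive G X]
    (hm : 3 ≤ Fintype.card X) (x₀ : X) (k : ℕ) :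
    ((Fintype.card X).choose k : ℝ) * (k * Fintype.card G / Fintype.card X
        - k ^ 3 * Fintype.card G / ((Fintype.card X : ℝ) - 2) ^ 2)
      ≤ ∑ T ∈ (univ : Finset X).powersetCard k, (#(disjointMovers G x₀ T) : ℝ) := by
  set m := Fintype.card X
  set n := Fintype.card G
  have hsplit : ∑ T ∈ (univ : Finset X).powersetCard k, (#{g : G | g • x₀ ∈ T} : ℝ)
      ≤ ∑ T ∈ (univ : Finset X).powersetCard k, ((#(disjointMovers G x₀ T) : ℝ)
          + #{p : G × X | {p.1 • x₀, p.2, p.1 • p.2} ⊆ T}) :=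
    sum_le_sum fun T _ => by exact_mod_cast card_filter_smul_mem_le G x₀ T
  rw [sum_add_distrib, sum_card_filter_smul_mem] at hsplit
  have hbad := sum_card_filter_triple_subset_le G x₀ k
  calc ((m.choose k : ℕ) : ℝ) * (k * n / m - k ^ 3 * n / ((m : ℝ) - 2) ^ 2)
      = n * supersetCount m k 1 - n * (m.choose k * k ^ 3 / ((m : ℝ) - 2) ^ 2) := by
        rw [supersetCount_one]
        ring
    _ ≤ n * supersetCount m k 1 - n * (m * supersetCount m k 3 + 3 * supersetCount m k 2
          + supersetCount m k 1 / m) := by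
        gcongr
        exact supersetCount_three_two_one_le hm k
    _ ≤ _ := by linarith

end Action

theorem alpha_lower_bound_averaging_general {G X : Type*} [Group G] [Fintype G]
    [Fintype X] [MulAction G X] [MulAction.IsPretransitive G X]
    (hm : 2 < Fintype.card X) (k : ℕ)
    (hk2 : k ≤ Fintype.card X - 1) :
    (k : ℝ) * Fintype.card G / Fintype.card X
      - (k : ℝ) ^ 3 * Fintype.card G / ((Fintype.card X : ℝ) - 2) ^ 2
      ≤ (alphaPF G : ℝ) := by
  classical
  obtain ⟨x₀⟩ : Nonempty X := Fintype.card_pos_iff.1 (by omega)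
  have hne : ((univ : Finset X).powersetCard k).Nonempty :=
    powersetCard_nonempty.2 (by rw [card_univ]; omega)
  obtain ⟨T, -, hT⟩ := exists_le_of_sum_le hne
    (f := fun _ => (k : ℝ) * Fintype.card G / Fintype.card X
      - (k : ℝ) ^ 3 * Fintype.card G / ((Fintype.card X : ℝ) - 2) ^ 2)
    (g := fun T => (#(disjointMovers G x₀ T) : ℝ))
    (by rw [sum_const, card_powersetCard, card_univ, nsmul_eq_mul]
        exact le_sum_card_disjointMovers G hm x₀ k)
  exact hT.trans (by exact_mod_cast card_le_alphaPF (isProductFree_disjointMovers G x₀ T))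

/-- If a finite group `G` of order `n` acts transitively on a set of size
`m > 2`, then for any `1 ≤ k ≤ m − 1` one has
`α(G) ≥ k·n/m − k³·n/(m−2)²`. -/
theorem alpha_lower_bound_averaging {G X : Type*} [Group G] [Fintype G]
    [Fintype X] [MulAction G X] [MulAction.IsPretransitive G X]
    (hm : 2 < Fintype.card X) (k : ℕ) (hk1 : 1 ≤ k)
    (hk2 : k ≤ Fintype.card X - 1) :
    (k : ℝ) * Fintype.card G / Fintype.card X
      - (k : ℝ) ^ 3 * Fintype.card G / ((Fintype.card X : ℝ) - 2) ^ 2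
      ≤ (alphaPF G : ℝ) :=
  alpha_lower_bound_averaging_general hm k hk2
end

section
/- (Gowers's spectral lemma) Let G be a finite group of order n, let A ⊆ G, and define the matrix N indexed by G × G with real entries by N(y, x) = 1 if y·x⁻¹ ∈ A and N(y, x) = 0 otherwise. Let δ > 0 be a real number such that every nonzero finite-dimensional real representation of G having no nonzero G-invariant vector has dimension at least δ. Then for every vector v : G → ℝ with ∑_{x ∈ G} v(x) = 0, one has ‖N v‖² ≤ (n·#A/δ)·‖v‖², where ‖·‖ is the Euclidean norm on ℝ^G. -/
open Module Module.End Matrix RCLike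
open scoped InnerProductSpace Pointwise

/-!
Put `Q = NᵀN`, so that `‖N v‖² = ⟪Q v, v⟫`. The operator `Q` is positive, commutes with the right
regular representation (`Nᵀ` is the Cayley matrix of `A⁻¹`) and preserves the sum-zero subspace
`W`. Let `μ` be the largest eigenvalue of `Q` on `W`. Its eigenspace in `W` is a subrepresentation
with no nonzero invariant vector, so its dimension `d` is at least `δ`, while positivity of `Q`
gives `μ d ≤ tr Q = n·#A`. Hence `⟪Q v, v⟫ ≤ μ‖v‖² ≤ (n·#A/δ)‖v‖²` for `v ∈ W`.
-/

namespace LinearMap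

variable {𝕜 E : Type*} [RCLike 𝕜] [NormedAddCommGroup E] [InnerProductSpace 𝕜 E]
  [FiniteDimensional 𝕜 E] {T : E →ₗ[𝕜] E}

theorem IsSymmetric.exists_hasEigenvalue_forall_re_inner_le [Nontrivial E]
    (hT : T.IsSymmetric) :
    ∃ μ : ℝ, HasEigenvalue T μ ∧ ∀ x, re ⟪T x, x⟫_𝕜 ≤ μ * ‖x‖ ^ 2 := by
  refine ⟨_, hT.hasEigenvalue_iSup_of_finiteDimensional, fun x => ?_⟩
  rcases eq_or_ne x 0 with rfl | hx
  · simp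
  have hbdd : BddAbove (Set.range fun x : {x : E // x ≠ 0} => re ⟪T x, x⟫_𝕜 / ‖(x : E)‖ ^ 2) :=
    ⟨‖T.toContinuousLinearMap‖, by
      rintro _ ⟨x, rfl⟩
      exact (le_abs_self _).trans (T.toContinuousLinearMap.rayleighQuotient_le_norm x)⟩
  have hx2 : 0 < ‖x‖ ^ 2 := by positivity
  simpa only [div_le_iff₀ hx2] using le_ciSup hbdd ⟨x, hx⟩

theorem IsSymmetric.exists_inf_eigenspace_ne_bot_forall_re_inner_le (hT : T.IsSymmetric)
    {W : Submodule 𝕜 E} (hW : ∀ x ∈ W, T x ∈ W) [Nontrivial W] :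
    ∃ μ : ℝ, W ⊓ eigenspace T μ ≠ ⊥ ∧ ∀ x ∈ W, re ⟪T x, x⟫_𝕜 ≤ μ * ‖x‖ ^ 2 := by
  obtain ⟨μ, hμ, hle⟩ := (hT.restrict_invariant hW).exists_hasEigenvalue_forall_re_inner_le
  obtain ⟨w, hw⟩ := hμ.exists_hasEigenvector
  refine ⟨μ, (Submodule.ne_bot_iff _).mpr ⟨w, ⟨w.2, ?_⟩, by simpa using hw.2⟩,
    fun x hx => hle ⟨x, hx⟩⟩
  exact mem_eigenspace_iff.mpr (congrArg Subtype.val hw.apply_eq_smul)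

theorem IsPositive.mul_finrank_le_re_trace (hT : T.IsPositive) {μ : ℝ} {K : Submodule 𝕜 E}
    (hK : K ≤ eigenspace T μ) : μ * finrank 𝕜 K ≤ re (trace 𝕜 E T) := by
  classical
  let bK := stdOrthonormalBasis 𝕜 K
  have hbK : Orthonormal 𝕜 fun i => (bK i : E) := bK.orthonormal.comp_linearIsometry K.subtypeₗᵢ
  have hv : Orthonormal 𝕜 ((↑) : Set.range (fun i => (bK i : E)) → E) :=
    (orthonormal_subtype_range hbK.linearIndependent.injective).mpr hbK
  obtain ⟨u, b, hvu, hb⟩ := hv.exists_orthonormalBasis_extension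
  have hμ : ∀ i, re ⟪(bK i : E), T (bK i)⟫_𝕜 = μ := by
    intro i
    rw [mem_eigenspace_iff.mp (hK (bK i).2)]
    simp [inner_smul_right, hbK.1 i]
  calc μ * finrank 𝕜 K = ∑ i, re ⟪(bK i : E), T (bK i)⟫_𝕜 := by
        simp only [hμ, Finset.sum_const, Finset.card_univ, Fintype.card_fin, nsmul_eq_mul,
          mul_comm]
    _ = ∑ x ∈ (Finset.univ.image fun i => (bK i : E)), re ⟪x, T x⟫_𝕜 := by
        rw [Finset.sum_image fun i _ j _ h => hbK.linearIndependent.injective h]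
    _ ≤ ∑ x ∈ u, re ⟪x, T x⟫_𝕜 := by
        refine Finset.sum_le_sum_of_subset_of_nonneg ?_ fun x _ _ => hT.re_inner_nonneg_right x
        intro x hx
        simp only [Finset.mem_image, Finset.mem_univ, true_and] at hx
        exact hvu hx
    _ = re (trace 𝕜 E T) := by
        rw [trace_eq_sum_inner T b, map_sum, hb, ← Finset.sum_coe_sort u]

end LinearMap

def Subrepresentation.eigenspace {k H V : Type*} [CommRing k] [Monoid H] [AddCommGroup V]
    [Module k V] {ρ : Representation k H V} (T : V →ₗ[k] V) (hT : ∀ g, Commute T (ρ g))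
    (μ : k) : Subrepresentation ρ where
  toSubmodule := Module.End.eigenspace T μ
  apply_mem_toSubmodule g _ hv := mapsTo_genEigenspace_of_comm (hT g) μ 1 hv

section

variable {G : Type*} [Group G]

variable (G) in
def rightRegular : Representation ℝ G (EuclideanSpace ℝ G) where
  toFun g :=
    { toFun v := WithLp.toLp 2 fun x => v (x * g)
      map_add' _ _ := rfl
      map_smul' _ _ := rfl }
  map_one' := by ext; simp
  map_mul' g h := by ext v x; exact congrArg v.ofLp (mul_assoc x g h).symm

@[simp]
theorem rightRegular_apply (g : G) (v : EuclideanSpace ℝ G) (x : G) :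
    rightRegular G g v x = v (x * g) := rfl

section

variable [DecidableEq G]

def cayleyMatrix (S : Finset G) : Matrix G G ℝ :=
  Matrix.of fun y x => if y * x⁻¹ ∈ S then 1 else 0

theorem cayleyMatrix_transpose (S : Finset G) : (cayleyMatrix S)ᵀ = cayleyMatrix S⁻¹ := by
  ext y x
  simp [cayleyMatrix]

theorem cayleyMatrix_apply_mul_right (S : Finset G) (y x g : G) :
    cayleyMatrix S (y * g) (x * g) = cayleyMatrix S y x := by
  simp [cayleyMatrix, mul_assoc]

theorem cayleyMatrix_apply_mul_self (S : Finset G) (y x : G) :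
    cayleyMatrix S y x * cayleyMatrix S y x = cayleyMatrix S y x := by
  simp only [cayleyMatrix, Matrix.of_apply]; split_ifs <;> simp

end

variable [Fintype G]

variable (G) in
def sumZero : Subrepresentation (rightRegular G) where
  toSubmodule :=
    { carrier := {v | ∑ x, v x = 0}
      add_mem' {u v} hu hv := by simp_all [Finset.sum_add_distrib]
      zero_mem' := by simp
      smul_mem' c v hv := by simp_all [← Finset.mul_sum] }
  apply_mem_toSubmodule g v hv :=
    (Fintype.sum_equiv (Equiv.mulRight g) _ (fun x => v x) fun _ => rfl).trans hv

theorem mem_sumZero {v : EuclideanSpace ℝ G} : v ∈ (sumZero G).toSubmodule ↔ ∑ x, v x = 0 :=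
  Iff.rfl

theorem eq_zero_of_mem_sumZero_of_forall_rightRegular_eq {v : EuclideanSpace ℝ G}
    (hv : v ∈ (sumZero G).toSubmodule) (hfix : ∀ g, rightRegular G g v = v) : v = 0 := by
  have hconst : ∀ x, v x = v 1 := fun x => by
    simpa using congrArg (· 1) (hfix x)
  rw [mem_sumZero, Fintype.sum_congr _ _ hconst, Finset.sum_const, nsmul_eq_mul,
    mul_eq_zero] at hv
  ext x
  rw [hconst, hv.resolve_left (by simp)]
  rfl

variable [DecidableEq G]

theorem sum_cayleyMatrix_apply (S : Finset G) (x : G) : ∑ y, cayleyMatrix S y x = S.card := by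
  rw [← Fintype.sum_equiv (Equiv.mulRight x) (fun y => if y ∈ S then (1 : ℝ) else 0) _
    fun y => by simp [cayleyMatrix]]
  simp

theorem toEuclideanLin_cayleyMatrix_apply (S : Finset G) (v : EuclideanSpace ℝ G) (y : G) :
    toEuclideanLin (cayleyMatrix S) v y = ∑ x, cayleyMatrix S y x * v x := rfl

theorem toEuclideanLin_cayleyMatrix_rightRegular (S : Finset G) (g : G) (v : EuclideanSpace ℝ G) :
    toEuclideanLin (cayleyMatrix S) (rightRegular G g v) =
      rightRegular G g (toEuclideanLin (cayleyMatrix S) v) := by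
  ext y
  simp only [toEuclideanLin_cayleyMatrix_apply, rightRegular_apply]
  exact Fintype.sum_equiv (Equiv.mulRight g) _ _ fun x => by
    simp [cayleyMatrix_apply_mul_right]

theorem toEuclideanLin_cayleyMatrix_mem_sumZero (S : Finset G) {v : EuclideanSpace ℝ G}
    (hv : v ∈ (sumZero G).toSubmodule) :
    toEuclideanLin (cayleyMatrix S) v ∈ (sumZero G).toSubmodule := by
  rw [mem_sumZero] at hv ⊢
  simp only [toEuclideanLin_cayleyMatrix_apply]
  rw [Finset.sum_comm]
  simp [← Finset.sum_mul, sum_cayleyMatrix_apply, ← Finset.mul_sum, hv]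

noncomputable def cayleyGram (A : Finset G) : EuclideanSpace ℝ G →ₗ[ℝ] EuclideanSpace ℝ G :=
  (toEuclideanLin (cayleyMatrix A)).adjoint ∘ₗ toEuclideanLin (cayleyMatrix A)

theorem isPositive_cayleyGram (A : Finset G) : (cayleyGram A).IsPositive :=
  LinearMap.isPositive_adjoint_comp_self _

theorem cayleyGram_eq (A : Finset G) :
    cayleyGram A = toEuclideanLin (cayleyMatrix A⁻¹) ∘ₗ toEuclideanLin (cayleyMatrix A) := by
  rw [cayleyGram, ← toEuclideanLin_conjTranspose_eq_adjoint, conjTranspose_eq_transpose_of_trivial,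
    cayleyMatrix_transpose]

theorem inner_cayleyGram_self (A : Finset G) (v : EuclideanSpace ℝ G) :
    ⟪cayleyGram A v, v⟫_ℝ = ‖toEuclideanLin (cayleyMatrix A) v‖ ^ 2 := by
  rw [cayleyGram, LinearMap.comp_apply, LinearMap.adjoint_inner_left, real_inner_self_eq_norm_sq]

theorem trace_cayleyGram (A : Finset G) :
    LinearMap.trace ℝ _ (cayleyGram A) = Fintype.card G * A.card := by
  rw [LinearMap.trace_eq_sum_inner _ (EuclideanSpace.basisFun G ℝ)]
  refine (Fintype.sum_congr _ (fun _ => (A.card : ℝ)) fun x => ?_).trans (by simp)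
  rw [real_inner_comm, inner_cayleyGram_self, EuclideanSpace.real_norm_sq_eq]
  simp [toEuclideanLin_cayleyMatrix_apply, sq, cayleyMatrix_apply_mul_self, sum_cayleyMatrix_apply]

theorem cayleyGram_mem_sumZero (A : Finset G) {v : EuclideanSpace ℝ G}
    (hv : v ∈ (sumZero G).toSubmodule) : cayleyGram A v ∈ (sumZero G).toSubmodule := by
  rw [cayleyGram_eq]
  exact toEuclideanLin_cayleyMatrix_mem_sumZero _ (toEuclideanLin_cayleyMatrix_mem_sumZero _ hv)

theorem commute_cayleyGram_rightRegular (A : Finset G) (g : G) :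
    Commute (cayleyGram A) (rightRegular G g) := by
  ext1 v
  simp [cayleyGram_eq, Module.End.mul_apply, toEuclideanLin_cayleyMatrix_rightRegular]

end

/-- Gowers's spectral lemma: let `G` be a finite group of order `n`, `A ⊆ G`,
and `N` the bipartite Cayley graph matrix `N(y,x) = 1` iff `y·x⁻¹ ∈ A`. If
every nonzero finite-dimensional real representation of `G` with no nonzero
invariant vector has dimension at least `δ > 0`, then for every `v : G → ℝ`
with `∑ x, v x = 0` one has `‖N v‖² ≤ (n·#A/δ)·‖v‖²`. -/
theorem gowers_spectral_lemma {G : Type} [Group G] [Fintype G] [DecidableEq G]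
    (A : Finset G) (δ : ℝ) (hδ : 0 < δ)
    (hrep : ∀ (V : Type) [AddCommGroup V] [Module ℝ V] [FiniteDimensional ℝ V]
      (ρ : Representation ℝ G V), Nontrivial V →
      (∀ v : V, (∀ g : G, ρ g v = v) → v = 0) →
      δ ≤ Module.finrank ℝ V) :
    ∀ v : G → ℝ, (∑ x : G, v x) = 0 →
      (∑ y : G, (∑ x : G, (if y * x⁻¹ ∈ A then (1 : ℝ) else 0) * v x) ^ 2)
        ≤ (Fintype.card G * A.card / δ) * ∑ x : G, (v x) ^ 2 := by
  intro v hv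
  set u : EuclideanSpace ℝ G := WithLp.toLp 2 v
  have hu : u ∈ (sumZero G).toSubmodule := hv
  rcases eq_or_ne u 0 with h0 | h0
  · have : v = 0 := congrArg WithLp.ofLp h0
    simp [this]
  have : Nontrivial (sumZero G).toSubmodule := nontrivial_of_ne ⟨u, hu⟩ 0 (by simpa using h0)
  obtain ⟨μ, hK, hμ⟩ := (isPositive_cayleyGram A).isSymmetric
    |>.exists_inf_eigenspace_ne_bot_forall_re_inner_le fun _ => cayleyGram_mem_sumZero A
  let K := sumZero G ⊓ Subrepresentation.eigenspace _ (commute_cayleyGram_rightRegular A) μ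
  have : Nontrivial K.toSubmodule := Submodule.nontrivial_iff_ne_bot.mpr hK
  have hδK : δ ≤ finrank ℝ K.toSubmodule :=
    hrep _ K.toRepresentation inferInstance fun w hw => Subtype.ext
      (eq_zero_of_mem_sumZero_of_forall_rightRegular_eq w.2.1 fun g => congrArg Subtype.val (hw g))
  have hμK := (isPositive_cayleyGram A).mul_finrank_le_re_trace (K := K.toSubmodule) inf_le_right
  rw [trace_cayleyGram, re_to_real] at hμK
  have hμδ : μ ≤ Fintype.card G * A.card / δ := by
    rw [le_div_iff₀ hδ]
    rcases le_or_gt μ 0 with h | h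
    · nlinarith [show (0 : ℝ) ≤ Fintype.card G * A.card by positivity]
    · nlinarith
  calc _ = ‖toEuclideanLin (cayleyMatrix A) u‖ ^ 2 := by
        rw [EuclideanSpace.real_norm_sq_eq]; rfl
    _ = ⟪cayleyGram A u, u⟫_ℝ := (inner_cayleyGram_self A u).symm
    _ ≤ μ * ‖u‖ ^ 2 := hμ u hu
    _ ≤ Fintype.card G * A.card / δ * ‖u‖ ^ 2 := by gcongr
    _ = _ := by rw [EuclideanSpace.real_norm_sq_eq]
end

section
/- (Gowers) Let G be a finite group of order n, and let δ > 0 be a real number such that every nonzero finite-dimensional real representation of G having no nonzero G-invariant vector has dimension at least δ. If A, B, C are subsets of G such that there is no true equation ab = c with a ∈ A, b ∈ B, c ∈ C, then #A · #B · #C · δ ≤ n³. -/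
/-!
Put `β = #B / n` and `f = 1_B - β`, and let `S` be left convolution by `f` on `ℓ²(G)`. Since no
`a * b` with `a ∈ A`, `b ∈ B` lies in `C`, `S 1_A` equals `-β #A` on all of `C`, so
`‖S 1_A‖² ≥ #C β² #A²`. Let `λ` be the top eigenvalue of `S* S`, so that `‖S u‖² ≤ λ ‖u‖²`.
Its eigenspace is stable under left translations, which commute with `S`, and contains no nonzero
translation-invariant vector: such vectors are constant, `S` kills constants because `f` has mean
zero, and `λ > 0` unless `S = 0`. Hence its dimension `d` is at least `δ`. Bessel's inequality applied to the rows of `S` gives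
`λ d ≤ n ‖f‖² ≤ n #B`, and altogether `δ #C β² #A² ≤ n #B #A`, which is the claim.
-/

open Finset Module Module.End RealInnerProductSpace

section Spectral

variable {E : Type*} [NormedAddCommGroup E] [InnerProductSpace ℝ E] [FiniteDimensional ℝ E]

noncomputable def LinearMap.rayleighSup (T : E →ₗ[ℝ] E) : ℝ :=
  ⨆ x : {x : E // x ≠ 0}, ⟪T x, x⟫ / ‖(x : E)‖ ^ 2

lemma LinearMap.inner_apply_self_le_rayleighSup (T : E →ₗ[ℝ] E) (x : E) :
    ⟪T x, x⟫ ≤ T.rayleighSup * ‖x‖ ^ 2 := by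
  rcases eq_or_ne x 0 with rfl | hx
  · simp
  have hbdd : BddAbove (Set.range fun y : {y : E // y ≠ 0} => ⟪T y, y⟫ / ‖(y : E)‖ ^ 2) := by
    refine ⟨‖LinearMap.toContinuousLinearMap T‖, ?_⟩
    rintro _ ⟨y, rfl⟩
    exact (le_abs_self _).trans
      ((LinearMap.toContinuousLinearMap T).rayleighQuotient_le_norm y)
  rw [← div_le_iff₀ (by positivity)]
  exact le_ciSup hbdd (⟨x, hx⟩ : {y : E // y ≠ 0})

lemma LinearMap.IsSymmetric.hasEigenvalue_rayleighSup [Nontrivial E] {T : E →ₗ[ℝ] E}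
    (hT : T.IsSymmetric) : HasEigenvalue T T.rayleighSup :=
  hT.hasEigenvalue_iSup_of_finiteDimensional

lemma mul_finrank_le_sum_norm_sq {X : Type*} [Fintype X] (k : X → E) (W : Submodule ℝ E)
    (μ : ℝ) (hW : ∀ v ∈ W, ∑ x, ⟪k x, v⟫ ^ 2 = μ * ‖v‖ ^ 2) :
    μ * finrank ℝ W ≤ ∑ x, ‖k x‖ ^ 2 := by
  set b : Fin (finrank ℝ W) → E := fun i => stdOrthonormalBasis ℝ W i
  have hb : Orthonormal ℝ b :=
    (stdOrthonormalBasis ℝ W).orthonormal.comp_linearIsometry W.subtypeₗᵢ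
  calc μ * finrank ℝ W = ∑ i, μ * ‖b i‖ ^ 2 := by simp [hb.1, mul_comm]
    _ = ∑ i, ∑ x, ⟪b i, k x⟫ ^ 2 := sum_congr rfl fun i _ => by
        simp only [real_inner_comm _ (b i)]; exact (hW _ (Submodule.coe_mem _)).symm
    _ = ∑ x, ∑ i, ⟪b i, k x⟫ ^ 2 := sum_comm
    _ ≤ ∑ x, ‖k x‖ ^ 2 := sum_le_sum fun x _ => by simpa using hb.sum_inner_products_le (k x)

lemma norm_apply_sq_eq_inner_adjoint_mul_self (S : E →ₗ[ℝ] E) (v : E) :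
    ‖S v‖ ^ 2 = ⟪(S.adjoint * S) v, v⟫ := by
  rw [Module.End.mul_apply, LinearMap.adjoint_inner_left, real_inner_self_eq_norm_sq]

end Spectral

section Unitary

variable {G E : Type*} [Group G] [NormedAddCommGroup E] [InnerProductSpace ℝ E]
  [FiniteDimensional ℝ E]

lemma commute_adjoint_mul_self {S U : E →ₗ[ℝ] E} (hU : Commute S U) (hU' : Commute S U.adjoint) :
    Commute (S.adjoint * S) U := by
  have : Commute S.adjoint U := by
    simpa only [LinearMap.star_eq_adjoint, LinearMap.adjoint_adjoint] using hU'.star_star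
  exact this.mul_left hU

variable (ρ : Representation ℝ G E) (hρ : ∀ g, (ρ g).adjoint = ρ g⁻¹) {S : E →ₗ[ℝ] E}
  (hS : ∀ g, Commute S (ρ g))

noncomputable def Representation.eigenspaceAdjointMulSelf (μ : ℝ) : Subrepresentation ρ where
  toSubmodule := eigenspace (S.adjoint * S) μ
  apply_mem_toSubmodule g :=
    mapsTo_genEigenspace_of_comm (commute_adjoint_mul_self (hS g) (hρ g ▸ hS g⁻¹)) μ 1

lemma Representation.eq_zero_of_invariant_mem_eigenspaceAdjointMulSelf {μ : ℝ} (hμ : μ ≠ 0) (hker : ∀ v, (∀ g, ρ g v = v) → S v = 0)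
    (v : (ρ.eigenspaceAdjointMulSelf hρ hS μ).toSubmodule)
    (hv : ∀ g, (ρ.eigenspaceAdjointMulSelf hρ hS μ).toRepresentation g v = v) : v = 0 := by
  have hSv : S v = 0 := hker v fun g => congrArg Subtype.val (hv g)
  have hμv : μ • (v : E) = 0 := by
    rw [← mem_eigenspace_iff.mp v.2, Module.End.mul_apply, hSv, map_zero]
  exact Subtype.ext ((smul_eq_zero.mp hμv).resolve_left hμ)

end Unitary

section Convolution

variable {G : Type*} [Group G]

noncomputable def euclideanLeftRegular : Representation ℝ G (EuclideanSpace ℝ G) where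
  toFun g :=
    { toFun u := WithLp.toLp 2 fun x => u (g⁻¹ * x)
      map_add' _ _ := rfl
      map_smul' _ _ := rfl }
  map_one' := by ext; simp
  map_mul' _ _ := by ext; simp [mul_assoc]; rfl

@[simp]
lemma euclideanLeftRegular_apply (g : G) (u : EuclideanSpace ℝ G) (x : G) :
    euclideanLeftRegular g u x = u (g⁻¹ * x) := rfl

variable [Fintype G]

lemma sum_comp_inv_mul {M : Type*} [AddCommMonoid M] (f : G → M) (x : G) :
    ∑ y, f (y⁻¹ * x) = ∑ y, f y :=
  Fintype.sum_equiv ((Equiv.inv G).trans (Equiv.mulRight x)) _ _ fun _ => rfl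

lemma adjoint_euclideanLeftRegular (g : G) :
    (euclideanLeftRegular g).adjoint = euclideanLeftRegular (G := G) g⁻¹ := by
  refine ((LinearMap.eq_adjoint_iff _ _).mpr fun u v => ?_).symm
  simp only [PiLp.inner_apply, euclideanLeftRegular_apply, inv_inv, RCLike.inner_apply,
    conj_trivial]
  exact Fintype.sum_equiv (Equiv.mulLeft g) _ _ fun x => by simp

def convKernel (f : G → ℝ) (x : G) : EuclideanSpace ℝ G := WithLp.toLp 2 fun y => f (y⁻¹ * x)

noncomputable def leftConv (f : G → ℝ) : EuclideanSpace ℝ G →ₗ[ℝ] EuclideanSpace ℝ G where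
  toFun u := WithLp.toLp 2 fun x => ⟪convKernel f x, u⟫
  map_add' _ _ := by ext; simp [inner_add_right]
  map_smul' _ _ := by ext; simp [inner_smul_right]

lemma leftConv_apply (f : G → ℝ) (u : EuclideanSpace ℝ G) (x : G) :
    leftConv f u x = ⟪convKernel f x, u⟫ := rfl

lemma leftConv_apply_eq_sum (f : G → ℝ) (u : EuclideanSpace ℝ G) (x : G) :
    leftConv f u x = ∑ y, f (y⁻¹ * x) * u y := by
  simp [leftConv_apply, convKernel, PiLp.inner_apply, mul_comm]

lemma norm_convKernel_sq (f : G → ℝ) (x : G) : ‖convKernel f x‖ ^ 2 = ∑ y, f y ^ 2 := by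
  simp [EuclideanSpace.real_norm_sq_eq, convKernel, sum_comp_inv_mul fun y => f y ^ 2]

lemma norm_leftConv_sq (f : G → ℝ) (u : EuclideanSpace ℝ G) :
    ‖leftConv f u‖ ^ 2 = ∑ x, ⟪convKernel f x, u⟫ ^ 2 := by
  simp [EuclideanSpace.real_norm_sq_eq, leftConv_apply]

lemma commute_leftConv_euclideanLeftRegular (f : G → ℝ) (g : G) :
    Commute (leftConv f) (euclideanLeftRegular g) := by
  refine LinearMap.ext fun u => PiLp.ext fun x => ?_
  simp only [Module.End.mul_apply, leftConv_apply_eq_sum, euclideanLeftRegular_apply]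
  exact Fintype.sum_equiv (Equiv.mulLeft g⁻¹) _ _ fun y => by simp [mul_assoc]

lemma leftConv_eq_zero_of_invariant {f : G → ℝ} (hf : ∑ y, f y = 0)
    {v : EuclideanSpace ℝ G} (hv : ∀ g, euclideanLeftRegular g v = v) : leftConv f v = 0 := by
  have hconst : ∀ y, v y = v 1 := fun y => by
    simpa using congrArg (· 1) (hv y⁻¹)
  ext x
  simp [leftConv_apply_eq_sum, hconst, ← sum_mul, sum_comp_inv_mul f, hf]

end Convolution

def IsQuasirandom (G : Type) [Group G] (δ : ℝ) : Prop :=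
  ∀ (V : Type) [AddCommGroup V] [Module ℝ V] [FiniteDimensional ℝ V]
    (ρ : Representation ℝ G V), Nontrivial V →
    (∀ v : V, (∀ g : G, ρ g v = v) → v = 0) → δ ≤ finrank ℝ V

theorem IsQuasirandom.mul_norm_leftConv_sq_le {G : Type} [Group G] [Fintype G] {δ : ℝ}
    (hG : IsQuasirandom G δ) {f : G → ℝ} (hf : ∑ y, f y = 0) (u : EuclideanSpace ℝ G) :
    δ * ‖leftConv f u‖ ^ 2 ≤ Fintype.card G * (∑ y, f y ^ 2) * ‖u‖ ^ 2 := by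
  set S := leftConv f
  set μ := (S.adjoint * S).rayleighSup
  have hSu : ‖S u‖ ^ 2 ≤ μ * ‖u‖ ^ 2 := by
    rw [norm_apply_sq_eq_inner_adjoint_mul_self]
    exact (S.adjoint * S).inner_apply_self_le_rayleighSup u
  rcases le_or_gt μ 0 with hμ | hμ
  · have hSu0 : ‖S u‖ ^ 2 = 0 :=
      le_antisymm (hSu.trans (mul_nonpos_of_nonpos_of_nonneg hμ (by positivity))) (by positivity)
    rw [hSu0, mul_zero]
    positivity
  set W := (euclideanLeftRegular (G := G)).eigenspaceAdjointMulSelf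
    adjoint_euclideanLeftRegular (S := S) (commute_leftConv_euclideanLeftRegular f) μ
  have hW : Nontrivial W.toSubmodule := Submodule.nontrivial_iff_ne_bot.mpr
    (hasEigenvalue_iff.mp (LinearMap.isSymmetric_adjoint_mul_self S).hasEigenvalue_rayleighSup)
  have hfree : ∀ v : W.toSubmodule, (∀ g, W.toRepresentation g v = v) → v = 0 :=
    Representation.eq_zero_of_invariant_mem_eigenspaceAdjointMulSelf _ _ _ hμ.ne'
      fun _ => leftConv_eq_zero_of_invariant hf
  have hδ : δ ≤ finrank ℝ W.toSubmodule := hG _ W.toRepresentation hW hfree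
  have hμW : μ * finrank ℝ W.toSubmodule ≤ Fintype.card G * ∑ y, f y ^ 2 := by
    calc _ ≤ ∑ x, ‖convKernel f x‖ ^ 2 := mul_finrank_le_sum_norm_sq _ _ _ fun v hv => by
            rw [← norm_leftConv_sq, norm_apply_sq_eq_inner_adjoint_mul_self,
              mem_eigenspace_iff.mp hv, real_inner_smul_left, real_inner_self_eq_norm_sq]
      _ = _ := by simp [norm_convKernel_sq]
  calc δ * ‖S u‖ ^ 2 ≤ finrank ℝ W.toSubmodule * ‖S u‖ ^ 2 := by gcongr
    _ ≤ finrank ℝ W.toSubmodule * (μ * ‖u‖ ^ 2) := by gcongr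
    _ = μ * finrank ℝ W.toSubmodule * ‖u‖ ^ 2 := by ring
    _ ≤ Fintype.card G * (∑ y, f y ^ 2) * ‖u‖ ^ 2 := by gcongr

section Indicators

variable {α : Type*} [Fintype α]

lemma card_mul_sq_le_norm_sq {C : Finset α} {v : EuclideanSpace ℝ α} {t : ℝ}
    (h : ∀ c ∈ C, v c = t) : #C * t ^ 2 ≤ ‖v‖ ^ 2 := by
  rw [EuclideanSpace.real_norm_sq_eq]
  calc #C * t ^ 2 = ∑ c ∈ C, v c ^ 2 := by simp +contextual [h]
    _ ≤ ∑ x, v x ^ 2 := sum_le_sum_of_subset_of_nonneg (subset_univ C) fun _ _ _ => sq_nonneg _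

variable [DecidableEq α]

noncomputable def Finset.euclideanIndicator (A : Finset α) : EuclideanSpace ℝ α :=
  WithLp.toLp 2 fun x => if x ∈ A then 1 else 0

lemma Finset.norm_euclideanIndicator_sq (A : Finset α) : ‖A.euclideanIndicator‖ ^ 2 = #A := by
  simp [EuclideanSpace.real_norm_sq_eq, euclideanIndicator, apply_ite (· ^ 2)]

noncomputable def balancedIndicator (B : Finset α) (x : α) : ℝ :=
  (if x ∈ B then 1 else 0) - #B / Fintype.card α

lemma sum_balancedIndicator [Nonempty α] (B : Finset α) : ∑ x, balancedIndicator B x = 0 := by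
  have hcard : (Fintype.card α : ℝ) ≠ 0 := by simp
  simp [balancedIndicator, sum_sub_distrib, mul_div_cancel₀ _ hcard]

lemma sum_balancedIndicator_sq_le [Nonempty α] (B : Finset α) :
    ∑ x, balancedIndicator B x ^ 2 ≤ #B := by
  set β : ℝ := #B / Fintype.card α
  have hβ : Fintype.card α * β = #B := mul_div_cancel₀ _ (by simp)
  have hsq : ∀ x,
      balancedIndicator B x ^ 2 = (if x ∈ B then 1 else 0) * (1 - 2 * β) + β ^ 2 := by
    intro x; unfold balancedIndicator; split_ifs <;> ring
  have hβ0 : 0 ≤ β := by positivity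
  simp only [hsq, sum_add_distrib, ← sum_mul, sum_boole, sum_const, card_univ, nsmul_eq_mul,
    filter_mem_eq_of_subset (subset_univ B)]
  nlinarith

end Indicators

lemma leftConv_balancedIndicator_apply {G : Type*} [Group G] [Fintype G] [DecidableEq G]
    {A B C : Finset G}
    (hABC : ∀ a ∈ A, ∀ b ∈ B, ∀ c ∈ C, a * b ≠ c) {c : G} (hc : c ∈ C) :
    leftConv (balancedIndicator B) A.euclideanIndicator c = -(#B / Fintype.card G * #A) := by
  rw [leftConv_apply_eq_sum]
  calc ∑ y, balancedIndicator B (y⁻¹ * c) * A.euclideanIndicator y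
      = ∑ a ∈ A, balancedIndicator B (a⁻¹ * c) := by simp [Finset.euclideanIndicator]
    _ = ∑ _a ∈ A, -(#B / Fintype.card G : ℝ) := sum_congr rfl fun a ha => by
        have : a⁻¹ * c ∉ B := fun hb => hABC a ha _ hb c hc (mul_inv_cancel_left a c)
        simp [balancedIndicator, this]
    _ = _ := by simp [mul_comm]

/-- Gowers: let `G` be a finite group of order `n` such that every nonzero
finite-dimensional real representation of `G` with no nonzero invariant
vector has dimension at least `δ > 0`. If `A, B, C ⊆ G` admit no true
equation `a·b = c` with `a ∈ A`, `b ∈ B`, `c ∈ C`, then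
`#A · #B · #C · δ ≤ n³`. -/
theorem gowers_product_bound {G : Type} [Group G] [Fintype G]
    (δ : ℝ) (hδ : 0 < δ)
    (hrep : ∀ (V : Type) [AddCommGroup V] [Module ℝ V] [FiniteDimensional ℝ V]
      (ρ : Representation ℝ G V), Nontrivial V →
      (∀ v : V, (∀ g : G, ρ g v = v) → v = 0) →
      δ ≤ Module.finrank ℝ V)
    (A B C : Finset G)
    (hABC : ∀ a ∈ A, ∀ b ∈ B, ∀ c ∈ C, a * b ≠ c) :
    (A.card : ℝ) * B.card * C.card * δ ≤ (Fintype.card G : ℝ) ^ 3 := by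
  classical
  set n : ℝ := (Fintype.card G : ℝ)
  set S := leftConv (balancedIndicator B)
  have hn : 0 < n := by positivity
  have hlow : #C * (#B / n * #A) ^ 2 ≤ ‖S A.euclideanIndicator‖ ^ 2 := by
    rw [← neg_sq]
    exact card_mul_sq_le_norm_sq fun c hc => leftConv_balancedIndicator_apply hABC hc
  have hup : δ * (#C * (#B / n * #A) ^ 2) ≤ n * #B * #A := calc
    _ ≤ δ * ‖S A.euclideanIndicator‖ ^ 2 := by gcongr
    _ ≤ n * (∑ x, balancedIndicator B x ^ 2) * ‖A.euclideanIndicator‖ ^ 2 :=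
      IsQuasirandom.mul_norm_leftConv_sq_le hrep (sum_balancedIndicator B) _
    _ ≤ n * #B * #A := by
      rw [A.norm_euclideanIndicator_sq]
      gcongr
      exact sum_balancedIndicator_sq_le B
  have hAB : (#A * #B : ℝ) * (#A * #B * #C * δ) ≤ (#A * #B) * n ^ 3 := calc
    _ = n ^ 2 * (δ * (#C * (#B / n * #A) ^ 2)) := by field_simp
    _ ≤ n ^ 2 * (n * #B * #A) := by gcongr
    _ = (#A * #B) * n ^ 3 := by ring
  rcases (by positivity : (0 : ℝ) ≤ #A * #B).eq_or_lt with hAB0 | hABpos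
  · rw [← hAB0, zero_mul, zero_mul]
    positivity
  · exact le_of_mul_le_mul_left hAB hABpos
end

section
/- Let G be a finite group of order n acting transitively on a finite set X with #X = m > 1, let x₀ ∈ X, and let U, V be subsets of X with #U = u and #V = v. Define A = {g ∈ G : g·U ∩ V = ∅}, B = {g ∈ G : g·x₀ ∈ U}, and C = {g ∈ G : g·x₀ ∈ V}, where g·U = {g·x : x ∈ U}. Then: (i) there is no true equation ab = c with a ∈ A, b ∈ B, c ∈ C; (ii) #B = u·n/m and #C = v·n/m; and (iii) #A ≥ n − u·v·n/m (as real numbers). -/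
open Finset MulAction

lemma fiber_card_mul {G X : Type*} [Group G] [Fintype G] [Fintype X]
    [DecidableEq X] [MulAction G X] [MulAction.IsPretransitive G X] (x y : X) :
    (Finset.univ.filter (fun g : G => g • x = y)).card * Fintype.card X = Fintype.card G := by
  classical
  obtain ⟨g₀, hg₀⟩ := MulAction.exists_smul_eq G x y
  have h1 : (Finset.univ.filter (fun g : G => g • x = y)).card
      = (Finset.univ.filter (fun g : G => g ∈ MulAction.stabilizer G x)).card := by
    apply Finset.card_bij' (fun g _ => g₀⁻¹ * g) (fun h _ => g₀ * h)
    · intro g hg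
      simp only [Finset.mem_filter, Finset.mem_univ, true_and] at hg ⊢
      rw [MulAction.mem_stabilizer_iff, mul_smul, hg, inv_smul_eq_iff, hg₀]
    · intro h hh
      simp only [Finset.mem_filter, Finset.mem_univ, true_and,
        MulAction.mem_stabilizer_iff] at hh ⊢
      rw [mul_smul, hh, hg₀]
    · intro g _; group
    · intro h _; group
  have h2 : Fintype.card (MulAction.stabilizer G x)
      = (Finset.univ.filter (fun g : G => g ∈ MulAction.stabilizer G x)).card :=
    Fintype.card_subtype _
  have h3 : Fintype.card (MulAction.orbit G x) = Fintype.card X :=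
    Fintype.card_congr ((Equiv.setCongr (MulAction.orbit_eq_univ G x)).trans (Equiv.Set.univ X))
  have h4 := MulAction.card_orbit_mul_card_stabilizer_eq_card_group G x
  rw [h3, h2] at h4
  rw [h1, mul_comm]
  exact h4

lemma filter_card_mul {G X : Type*} [Group G] [Fintype G] [Fintype X]
    [DecidableEq X] [MulAction G X] [MulAction.IsPretransitive G X] (x : X) (U : Finset X) :
    (Finset.univ.filter (fun g : G => g • x ∈ U)).card * Fintype.card X
      = U.card * Fintype.card G := by
  classical
  have hpart : (Finset.univ.filter (fun g : G => g • x ∈ U)).card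
      = ∑ y ∈ U, ((Finset.univ.filter (fun g : G => g • x ∈ U)).filter
          (fun g => g • x = y)).card :=
    Finset.card_eq_sum_card_fiberwise (by
      intro g hg; simpa using hg)
  have hfib : ∀ y ∈ U, ((Finset.univ.filter (fun g : G => g • x ∈ U)).filter
      (fun g => g • x = y)) = Finset.univ.filter (fun g : G => g • x = y) := by
    intro y hy
    ext g
    simp only [Finset.mem_filter, Finset.mem_univ, true_and]
    constructor
    · rintro ⟨-, h⟩; exact h
    · intro h; exact ⟨h ▸ hy, h⟩
  rw [hpart, Finset.sum_congr rfl (fun y hy => by rw [hfib y hy]), Finset.sum_mul]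
  rw [Finset.sum_congr rfl (fun y _ => fiber_card_mul x y), Finset.sum_const, smul_eq_mul]

/-- Let `G` be a finite group of order `n` acting transitively on a finite set
`X` of size `m > 1`, `x₀ ∈ X`, and `U, V ⊆ X` of sizes `u, v`. With
`A = {g : g·U ∩ V = ∅}`, `B = {g : g·x₀ ∈ U}`, `C = {g : g·x₀ ∈ V}`:
(i) there is no true equation `a·b = c` with `a ∈ A`, `b ∈ B`, `c ∈ C`;
(ii) `#B = u·n/m` and `#C = v·n/m`; (iii) `#A ≥ n − u·v·n/m`. -/
theorem three_set_construction {G X : Type*} [Group G] [Fintype G] [Fintype X]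
    [DecidableEq X] [MulAction G X] [MulAction.IsPretransitive G X]
    (hm : 1 < Fintype.card X) (x₀ : X) (U V : Finset X) (u v : ℕ)
    (hU : U.card = u) (hV : V.card = v)
    (A B C : Finset G)
    (hA : A = Finset.univ.filter (fun g : G => (U.image (fun x => g • x)) ∩ V = ∅))
    (hB : B = Finset.univ.filter (fun g : G => g • x₀ ∈ U))
    (hC : C = Finset.univ.filter (fun g : G => g • x₀ ∈ V)) :
    (∀ a ∈ A, ∀ b ∈ B, ∀ c ∈ C, a * b ≠ c) ∧
    B.card * Fintype.card X = u * Fintype.card G ∧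
    C.card * Fintype.card X = v * Fintype.card G ∧
    (Fintype.card G : ℝ) - u * v * Fintype.card G / Fintype.card X
      ≤ (A.card : ℝ) := by
  classical
  refine ⟨?_, ?_, ?_, ?_⟩
  · intro a ha b hb c hc heq
    rw [hA, Finset.mem_filter] at ha
    rw [hB, Finset.mem_filter] at hb
    rw [hC, Finset.mem_filter] at hc
    have : c • x₀ ∈ (U.image (fun x => a • x)) ∩ V := by
      rw [Finset.mem_inter]
      refine ⟨?_, hc.2⟩
      rw [Finset.mem_image]
      exact ⟨b • x₀, hb.2, by rw [← mul_smul, heq]⟩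
    rw [ha.2] at this
    exact absurd this (Finset.notMem_empty _)
  · rw [hB, ← hU]; exact filter_card_mul x₀ U
  · rw [hC, ← hV]; exact filter_card_mul x₀ V
  · -- bound complement
    set A' : Finset G := Finset.univ.filter
      (fun g : G => ¬ ((U.image (fun x => g • x)) ∩ V = ∅)) with hA'
    have hsub : A' ⊆ (U ×ˢ V).biUnion
        (fun p => Finset.univ.filter (fun g : G => g • p.1 = p.2)) := by
      intro g hg
      rw [hA', Finset.mem_filter] at hg
      obtain ⟨-, hg⟩ := hg
      obtain ⟨y, hy⟩ := Finset.nonempty_iff_ne_empty.2 hg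
      rw [Finset.mem_inter, Finset.mem_image] at hy
      obtain ⟨⟨x, hxU, hgx⟩, hyV⟩ := hy
      rw [Finset.mem_biUnion]
      exact ⟨(x, y), Finset.mem_product.2 ⟨hxU, hyV⟩, by simp [hgx]⟩
    have hle : A'.card * Fintype.card X ≤ u * v * Fintype.card G := by
      calc A'.card * Fintype.card X
          ≤ ((U ×ˢ V).biUnion
              (fun p => Finset.univ.filter (fun g : G => g • p.1 = p.2))).card
              * Fintype.card X := by
            exact Nat.mul_le_mul_right _ (Finset.card_le_card hsub)
        _ ≤ (∑ p ∈ U ×ˢ V,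
              (Finset.univ.filter (fun g : G => g • p.1 = p.2)).card)
              * Fintype.card X :=
            Nat.mul_le_mul_right _ (Finset.card_biUnion_le)
        _ = ∑ p ∈ U ×ˢ V,
              (Finset.univ.filter (fun g : G => g • p.1 = p.2)).card
              * Fintype.card X := by rw [Finset.sum_mul]
        _ = ∑ _p ∈ U ×ˢ V, Fintype.card G :=
            Finset.sum_congr rfl (fun p _ => fiber_card_mul p.1 p.2)
        _ = u * v * Fintype.card G := by
            rw [Finset.sum_const, Finset.card_product, hU, hV, smul_eq_mul]
    have hcompl : A.card + A'.card = Fintype.card G := by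
      rw [hA, hA']
      rw [Finset.card_filter_add_card_filter_not]
      exact Finset.card_univ
    have hmpos : (0:ℝ) < Fintype.card X := by positivity
    have hle' : (A'.card : ℝ) ≤ u * v * Fintype.card G / Fintype.card X := by
      rw [le_div_iff₀ hmpos]
      exact_mod_cast hle
    have : (A.card : ℝ) = Fintype.card G - A'.card := by
      have := hcompl
      push_cast [← this]
      ring
    rw [this]
    linarith
end

section
/- For every ε > 0 there exists M such that for every finite group G of order n admitting a transitive action on a finite set of size m with m ≥ M, there exist subsets A, B, C of G with B = C, such that there is no true equation ab = c with a ∈ A, b ∈ B, c ∈ C, and #A · #B · #C ≥ (e^{−1} − ε) · n³/m. -/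
/-!
Let `m = #X` and pick a random `S ⊆ X` containing each point independently with probability
`p = 1/√m`. Fix `x₀ ∈ X`, let `B = {g | g • x₀ ∈ S}` and let `A` be the set of `a` with
`a • S ∩ S = ∅`; then `A * B` misses `B`, and `#B = #S · #G / m`. The event `a ∈ A` is an
intersection of the decreasing events `{x, a • x} ⊄ S`, so by the Harris–FKG inequality
`P(a ∈ A) ≥ (1 - p) ^ #Fix(a) · (1 - 1/m) ^ m`; Bernoulli's inequality and Burnside's lemma
`∑ₐ #Fix(a) = #G` then give `𝔼 #A ≥ (1 - p) (1 - 1/m) ^ m #G → #G / e`. By Chebyshev,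
`#S ≥ (1 - t) √m` fails with probability `O(1/√m)`, so some `S` has
`#A · #B² ≥ (e⁻¹ - o(1)) (1 - t)² #G³ / m`.
-/

open Finset

section BiasedSubset

variable {α : Type*} [Fintype α] [DecidableEq α]

noncomputable def biasedWeight (p : ℝ) (S : Finset α) : ℝ := p ^ #S * (1 - p) ^ #Sᶜ

/-- `biasedExpect p f` is the expectation of `f S` for the random subset `S` that contains each
point independently with probability `p`. -/
noncomputable def biasedExpect (p : ℝ) (f : Finset α → ℝ) : ℝ := ∑ S, biasedWeight p S * f S

variable {p : ℝ}

lemma biasedWeight_nonneg (hp0 : 0 ≤ p) (hp1 : p ≤ 1) (S : Finset α) : 0 ≤ biasedWeight p S :=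
  mul_nonneg (pow_nonneg hp0 _) (pow_nonneg (sub_nonneg.2 hp1) _)

lemma biasedWeight_mul_biasedWeight (S T : Finset α) :
    biasedWeight p S * biasedWeight p T = biasedWeight p (S ∪ T) * biasedWeight p (S ∩ T) := by
  have hc : #Sᶜ + #Tᶜ = #(S ∪ T)ᶜ + #(S ∩ T)ᶜ := by
    rw [compl_union, compl_inter, add_comm #(Sᶜ ∩ Tᶜ), card_union_add_card_inter]
  simp only [biasedWeight, mul_mul_mul_comm, ← pow_add, card_union_add_card_inter, hc]

lemma biasedExpect_prod (a b : α → ℝ) :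
    biasedExpect p (fun S => (∏ x ∈ S, a x) * ∏ x ∈ Sᶜ, b x) = ∏ x, (p * a x + (1 - p) * b x) := by
  rw [prod_add, powerset_univ, biasedExpect]
  refine sum_congr rfl fun S _ => ?_
  rw [← compl_eq_univ_sdiff, prod_mul_distrib, prod_mul_distrib, prod_const, prod_const,
    biasedWeight]
  ring

lemma biasedExpect_const (c : ℝ) : biasedExpect p (fun _ : Finset α => c) = c := by
  have h := biasedExpect_prod (p := p) (fun _ : α => (1 : ℝ)) (fun _ => 1)
  simp only [prod_const_one, mul_one, add_sub_cancel, biasedExpect] at h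
  simp [biasedExpect, ← sum_mul, h]

lemma biasedExpect_add (f g : Finset α → ℝ) :
    biasedExpect p (fun S => f S + g S) = biasedExpect p f + biasedExpect p g := by
  simp only [biasedExpect, mul_add, sum_add_distrib]

lemma biasedExpect_sub (f g : Finset α → ℝ) :
    biasedExpect p (fun S => f S - g S) = biasedExpect p f - biasedExpect p g := by
  simp only [biasedExpect, mul_sub, sum_sub_distrib]

lemma biasedExpect_const_mul (c : ℝ) (f : Finset α → ℝ) :
    biasedExpect p (fun S => c * f S) = c * biasedExpect p f := by
  simp only [biasedExpect, mul_sum, mul_left_comm]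

lemma biasedExpect_sum {ι : Type*} (s : Finset ι) (f : ι → Finset α → ℝ) :
    biasedExpect p (fun S => ∑ i ∈ s, f i S) = ∑ i ∈ s, biasedExpect p (f i) := by
  simp only [biasedExpect, mul_sum]
  exact sum_comm

lemma biasedExpect_mono (hp0 : 0 ≤ p) (hp1 : p ≤ 1) {f g : Finset α → ℝ} (h : f ≤ g) :
    biasedExpect p f ≤ biasedExpect p g :=
  sum_le_sum fun S _ => mul_le_mul_of_nonneg_left (h S) (biasedWeight_nonneg hp0 hp1 S)

lemma biasedExpect_nonneg (hp0 : 0 ≤ p) (hp1 : p ≤ 1) {f : Finset α → ℝ} (hf : 0 ≤ f) :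
    0 ≤ biasedExpect p f :=
  sum_nonneg fun S _ => mul_nonneg (biasedWeight_nonneg hp0 hp1 S) (hf S)

lemma exists_le_biasedExpect (hp0 : 0 ≤ p) (hp1 : p ≤ 1) (f : Finset α → ℝ) :
    ∃ S, biasedExpect p f ≤ f S := by
  obtain ⟨S, -, hS⟩ := exists_max_image univ f univ_nonempty
  refine ⟨S, ?_⟩
  calc biasedExpect p f ≤ biasedExpect p (fun _ => f S) :=
        biasedExpect_mono hp0 hp1 fun T => hS T (mem_univ T)
    _ = f S := biasedExpect_const _

lemma biasedExpect_indicator_subset (T : Finset α) :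
    biasedExpect p (fun S => if T ⊆ S then 1 else 0) = p ^ #T := by
  have h := biasedExpect_prod (p := p) (fun _ => 1) (fun x => if x ∉ T then 1 else 0)
  simp only [prod_const_one, one_mul, prod_boole, mem_compl] at h
  convert h using 2
  · simp only [subset_iff]
    grind
  · rw [← prod_const, ← Fintype.prod_ite_mem]
    refine prod_congr rfl fun x _ => ?_
    split_ifs <;> simp_all

lemma biasedExpect_mul_ge_of_antitone (hp0 : 0 ≤ p) (hp1 : p ≤ 1) {f g : Finset α → ℝ}
    (hf0 : 0 ≤ f) (hg0 : 0 ≤ g) (hf : Antitone f) (hg : Antitone g) :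
    biasedExpect p f * biasedExpect p g ≤ biasedExpect p (fun S => f S * g S) := by
  -- `biasedWeight p` is log-modular, and antitone functions are monotone on the order dual.
  have h := fkg (α := (Finset α)ᵒᵈ) (μ := fun S => biasedWeight p (OrderDual.ofDual S))
    (f := fun S => f (OrderDual.ofDual S)) (g := fun S => g (OrderDual.ofDual S))
    (fun S => biasedWeight_nonneg hp0 hp1 _) (fun S => hf0 _) (fun S => hg0 _)
    hf.dual_left hg.dual_left
    (fun S T => (biasedWeight_mul_biasedWeight _ _).le)
  have hμ : ∑ S : (Finset α)ᵒᵈ, biasedWeight p (OrderDual.ofDual S) = 1 := by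
    have h1 := biasedExpect_const (p := p) (α := α) 1
    simp only [biasedExpect, mul_one] at h1
    exact h1
  rw [hμ, one_mul] at h
  exact h

lemma biasedExpect_prod_ge_of_antitone (hp0 : 0 ≤ p) (hp1 : p ≤ 1) {ι : Type*}
    (s : Finset ι) {f : ι → Finset α → ℝ} (hf0 : ∀ i, 0 ≤ f i) (hf : ∀ i, Antitone (f i)) :
    ∏ i ∈ s, biasedExpect p (f i) ≤ biasedExpect p (fun S => ∏ i ∈ s, f i S) := by
  classical
  induction s using Finset.induction_on with
  | empty => simp [biasedExpect_const]
  | insert j s hj ih =>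
    simp only [prod_insert hj]
    calc biasedExpect p (f j) * ∏ i ∈ s, biasedExpect p (f i)
        ≤ biasedExpect p (f j) * biasedExpect p (fun S => ∏ i ∈ s, f i S) :=
          mul_le_mul_of_nonneg_left ih (biasedExpect_nonneg hp0 hp1 (hf0 j))
      _ ≤ _ := biasedExpect_mul_ge_of_antitone hp0 hp1 (hf0 j)
          (fun S => prod_nonneg fun i _ => hf0 i S) (hf j)
          (fun S T hST => prod_le_prod (fun i _ => hf0 i T) fun i _ => hf i hST)

lemma biasedExpect_indicator_avoid_ge (hp0 : 0 ≤ p) (hp1 : p ≤ 1) (σ : α → α) :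
    (1 - p) ^ #{x | σ x = x} * (1 - p ^ 2) ^ Fintype.card α ≤
      biasedExpect p (fun S => if ∀ x ∈ S, σ x ∉ S then 1 else 0) := by
  -- The event is the intersection of the decreasing events `{x, σ x} ⊄ S`.
  set g : α → Finset α → ℝ := fun x S => 1 - if {x, σ x} ⊆ S then 1 else 0
  have hg0 : ∀ x, 0 ≤ g x := fun x S => by simp only [g]; split_ifs <;> norm_num
  have hg : ∀ x, Antitone (g x) := fun x S T hST => by
    by_cases hS : {x, σ x} ⊆ S
    · simp [g, hS, hS.trans hST]
    · simp only [g, hS, if_false]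
      split_ifs <;> norm_num
  have hEg : ∀ x, biasedExpect p (g x) = 1 - p ^ #{x, σ x} := fun x => by
    rw [biasedExpect_sub, biasedExpect_const, biasedExpect_indicator_subset]
  have hfactor : ∀ x, (if σ x = x then 1 - p else 1) * (1 - p ^ 2) ≤ 1 - p ^ #{x, σ x} := by
    intro x
    by_cases hx : σ x = x
    · rw [if_pos hx, hx, insert_eq_of_mem (mem_singleton_self x), card_singleton, pow_one]
      nlinarith
    · rw [if_neg hx, one_mul, card_pair (Ne.symm hx)]
  have hprod : ∀ S, ∏ x, g x S = if ∀ x ∈ S, σ x ∉ S then 1 else 0 := by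
    intro S
    split_ifs with h
    · exact prod_eq_one fun x _ => by simp +contextual [g, insert_subset_iff, h]
    · push Not at h
      obtain ⟨x, hx, hσx⟩ := h
      exact prod_eq_zero (mem_univ x) (by simp [g, insert_subset_iff, hx, hσx])
  calc (1 - p) ^ #{x | σ x = x} * (1 - p ^ 2) ^ Fintype.card α
      = ∏ x, (if σ x = x then 1 - p else 1) * (1 - p ^ 2) := by
        rw [prod_mul_distrib, prod_ite, prod_const, prod_const_one, mul_one, prod_const,
          card_univ]
    _ ≤ ∏ x, biasedExpect p (g x) :=
        prod_le_prod (fun x _ => mul_nonneg (by split_ifs <;> linarith) (by nlinarith))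
          fun x _ => (hfactor x).trans_eq (hEg x).symm
    _ ≤ biasedExpect p (fun S => ∏ x, g x S) :=
        biasedExpect_prod_ge_of_antitone hp0 hp1 univ hg0 hg
    _ = _ := by simp only [hprod]

lemma biasedExpect_card_sub_sq_le :
    biasedExpect p (fun S : Finset α => ((#S : ℝ) - p * Fintype.card α) ^ 2) ≤
      p * Fintype.card α := by
  set m : ℝ := (Fintype.card α : ℝ)
  have hcard : ∀ S : Finset α, (#S : ℝ) = ∑ x, if {x} ⊆ S then 1 else 0 := fun S => by
    simp
  have hE1 : biasedExpect p (fun S : Finset α => (#S : ℝ)) = p * m := by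
    simp only [hcard, biasedExpect_sum, biasedExpect_indicator_subset, card_singleton, pow_one,
      sum_const, card_univ, nsmul_eq_mul, m, mul_comm]
  have hE2 : biasedExpect p (fun S : Finset α => (#S : ℝ) ^ 2) ≤ p * m + (p * m) ^ 2 := by
    have hsq : ∀ S : Finset α, (#S : ℝ) ^ 2 = ∑ x, ∑ y, if {x, y} ⊆ S then 1 else 0 := by
      intro S
      rw [sq, hcard, sum_mul_sum]
      simp only [singleton_subset_iff, insert_subset_iff, ite_zero_mul_ite_zero, mul_one]
    have hpair : ∀ x y : α, p ^ #{x, y} ≤ p ^ 2 + if x = y then p else 0 := by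
      intro x y
      by_cases hxy : x = y
      · simp [hxy]; positivity
      · simp [hxy, card_pair hxy]
    calc biasedExpect p (fun S : Finset α => (#S : ℝ) ^ 2)
        = ∑ x, ∑ y, p ^ #{x, y} := by
          simp only [hsq, biasedExpect_sum, biasedExpect_indicator_subset]
      _ ≤ ∑ x : α, ∑ y : α, (p ^ 2 + if x = y then p else 0) :=
          sum_le_sum fun x _ => sum_le_sum fun y _ => hpair x y
      _ = p * m + (p * m) ^ 2 := by
          simp only [sum_add_distrib, sum_ite_eq, mem_univ, if_true, sum_const, card_univ,
            nsmul_eq_mul, m]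
          ring
  have hexpand : ∀ S : Finset α,
      ((#S : ℝ) - p * m) ^ 2 = (#S : ℝ) ^ 2 - 2 * (p * m) * #S + (p * m) ^ 2 := fun S => by ring
  simp only [hexpand, biasedExpect_add, biasedExpect_sub, biasedExpect_const_mul,
    biasedExpect_const, hE1]
  linarith

lemma biasedExpect_indicator_card_lt_le (hp0 : 0 ≤ p) (hp1 : p ≤ 1) {δ : ℝ} (hδ : 0 < δ) :
    biasedExpect p (fun S : Finset α => if (#S : ℝ) < p * Fintype.card α - δ then 1 else 0) ≤
      p * Fintype.card α / δ ^ 2 := by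
  set m : ℝ := (Fintype.card α : ℝ)
  have hpt : ∀ S : Finset α, (if (#S : ℝ) < p * m - δ then 1 else 0) ≤
      (δ ^ 2)⁻¹ * ((#S : ℝ) - p * m) ^ 2 := by
    intro S
    split_ifs with h
    · rw [← div_eq_inv_mul, one_le_div (by positivity)]
      nlinarith
    · positivity
  calc _ ≤ biasedExpect p (fun S : Finset α => (δ ^ 2)⁻¹ * ((#S : ℝ) - p * m) ^ 2) :=
        biasedExpect_mono hp0 hp1 hpt
    _ ≤ (δ ^ 2)⁻¹ * (p * m) := by
        rw [biasedExpect_const_mul]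
        exact mul_le_mul_of_nonneg_left biasedExpect_card_sub_sq_le (by positivity)
    _ = p * m / δ ^ 2 := by ring

end BiasedSubset

open MulAction

section TransitiveAction

variable {G X : Type*} [Group G] [MulAction G X] [IsPretransitive G X]

lemma card_group_eq_card_mul_card_stabilizer (x : X) :
    Nat.card G = Nat.card X * Nat.card (stabilizer G x) := by
  rw [← (stabilizer G x).card_mul_index, index_stabilizer_of_transitive, mul_comm]

variable [Fintype G] [DecidableEq X]

lemma card_filter_smul_eq (x y : X) :
    #{g : G | g • x = y} = Nat.card (stabilizer G x) := by
  obtain ⟨g₀, rfl⟩ := exists_smul_eq G x y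
  rw [← Fintype.card_subtype, ← Nat.card_eq_fintype_card]
  exact Nat.card_congr <| (Equiv.mulLeft g₀⁻¹).subtypeEquiv fun g => by
    simp [mem_stabilizer_iff, mul_smul, inv_smul_eq_iff]

lemma card_filter_smul_mem (x : X) (S : Finset X) :
    #{g : G | g • x ∈ S} = #S * Nat.card (stabilizer G x) := by
  rw [card_eq_sum_card_fiberwise (s := {g : G | g • x ∈ S}) (t := S) (f := (· • x))
    fun g hg => by simpa using hg, sum_const_nat fun y hy => ?_]
  rw [filter_filter, ← card_filter_smul_eq x y]
  congr 1
  ext g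
  simp only [mem_filter, mem_univ, true_and]
  exact and_iff_right_of_imp fun h => h ▸ hy

lemma sum_card_fixedPoints_le [Fintype X] :
    ∑ g : G, #{x : X | g • x = x} ≤ Fintype.card G := by
  classical
  have hΩ : Fintype.card (orbitRel.Quotient G X) ≤ 1 :=
    Fintype.card_le_one_iff_subsingleton.2 ((pretransitive_iff_subsingleton_quotient G X).1 ‹_›)
  have hfix : ∀ g : G, #{x : X | g • x = x} = Fintype.card (fixedBy X g) := fun g => by
    rw [← Fintype.card_subtype]
    rfl
  simp only [hfix, sum_card_fixedBy_eq_card_orbits_mul_card_group]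
  exact mul_le_of_le_one_left (Nat.zero_le _) hΩ

end TransitiveAction

/-- `(1 - p) (1 - p²) ^ m` bounds `𝔼 #(avoiders G S) / #G` from below, and `p m / δ²` bounds the
probability that `#S < p m - δ`. -/
noncomputable def avoiderDensity (p δ : ℝ) (m : ℕ) : ℝ := (1 - p) * (1 - p ^ 2) ^ m - p * m / δ ^ 2

section Avoiders

variable (G : Type*) {X : Type*} [Group G] [Fintype G] [MulAction G X] [Fintype X]
  [DecidableEq X] {p : ℝ}

def avoiders (S : Finset X) : Finset G := {a : G | ∀ x ∈ S, a • x ∉ S}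

variable {G}

lemma mul_ne_of_mem_avoiders {S : Finset X} {x₀ : X} {a b c : G} (ha : a ∈ avoiders G S)
    (hb : b • x₀ ∈ S) (hc : c • x₀ ∈ S) : a * b ≠ c := by
  rintro rfl
  rw [mul_smul] at hc
  exact (mem_filter.1 ha).2 _ hb hc

variable [IsPretransitive G X]

lemma biasedExpect_card_avoiders_ge (hp0 : 0 ≤ p) (hp1 : p ≤ 1) :
    Fintype.card G * ((1 - p) * (1 - p ^ 2) ^ Fintype.card X) ≤
      biasedExpect p (fun S : Finset X => (#(avoiders G S) : ℝ)) := by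
  set n : ℝ := (Fintype.card G : ℝ)
  set c : ℝ := (1 - p ^ 2) ^ Fintype.card X
  have hc : 0 ≤ c := pow_nonneg (by nlinarith) _
  have hcard : ∀ S : Finset X,
      (#(avoiders G S) : ℝ) = ∑ a : G, if ∀ x ∈ S, a • x ∉ S then 1 else 0 :=
    fun S => by simp [avoiders]
  have hfix : ∑ a : G, (#{x : X | a • x = x} : ℝ) ≤ n := by
    simp only [n]
    exact_mod_cast sum_card_fixedPoints_le (G := G) (X := X)
  have hbernoulli : ∀ k : ℕ, 1 - k * p ≤ (1 - p) ^ k := fun k => by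
    simpa [sub_eq_add_neg] using one_add_mul_le_pow (a := -p) (by linarith) k
  calc n * ((1 - p) * c)
      = (n - p * n) * c := by ring
    _ ≤ (n - p * ∑ a : G, (#{x : X | a • x = x} : ℝ)) * c :=
        mul_le_mul_of_nonneg_right (by nlinarith) hc
    _ = ∑ a : G, (1 - #{x : X | a • x = x} * p) * c := by
        simp only [sum_mul, sub_mul, sum_sub_distrib, sum_const, card_univ, n, nsmul_eq_mul,
          one_mul, mul_comm p]
    _ ≤ ∑ a : G, (1 - p) ^ #{x : X | a • x = x} * c :=
        sum_le_sum fun a _ => mul_le_mul_of_nonneg_right (hbernoulli _) hc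
    _ ≤ ∑ a : G, biasedExpect p (fun S => if ∀ x ∈ S, a • x ∉ S then 1 else 0) :=
        sum_le_sum fun a _ => biasedExpect_indicator_avoid_ge hp0 hp1 (a • ·)
    _ = biasedExpect p (fun S : Finset X => (#(avoiders G S) : ℝ)) := by
        simp only [hcard, biasedExpect_sum]

lemma exists_card_avoiders_ge (hp0 : 0 ≤ p) (hp1 : p ≤ 1) {δ : ℝ} (hδ : 0 < δ)
    (hD : 0 < avoiderDensity p δ (Fintype.card X)) :
    ∃ S : Finset X, p * Fintype.card X - δ ≤ #S ∧
      Fintype.card G * avoiderDensity p δ (Fintype.card X) ≤ #(avoiders G S) := by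
  set n : ℝ := (Fintype.card G : ℝ)
  set m : ℝ := (Fintype.card X : ℝ)
  set f : Finset X → ℝ := fun S => if p * m - δ ≤ #S then (#(avoiders G S) : ℝ) else 0
  have hA : ∀ S : Finset X, (#(avoiders G S) : ℝ) ≤ n := fun S => by
    simp only [n]
    exact_mod_cast card_le_univ (avoiders G S)
  have hf : ∀ S : Finset X,
      (#(avoiders G S) : ℝ) - n * (if (#S : ℝ) < p * m - δ then 1 else 0) ≤ f S := by
    intro S
    by_cases hS : p * m - δ ≤ #S
    · simp only [f, if_pos hS, if_neg (not_lt.2 hS)]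
      linarith
    · simp only [f, if_neg hS, if_pos (not_le.1 hS)]
      linarith [hA S]
  have hEf : n * avoiderDensity p δ (Fintype.card X) ≤ biasedExpect p f := by
    calc n * avoiderDensity p δ (Fintype.card X)
        = n * ((1 - p) * (1 - p ^ 2) ^ Fintype.card X) - n * (p * m / δ ^ 2) := by
          rw [avoiderDensity, mul_sub]
      _ ≤ biasedExpect p (fun S : Finset X => (#(avoiders G S) : ℝ)) -
            n * biasedExpect p (fun S : Finset X => if (#S : ℝ) < p * m - δ then 1 else 0) := by
          gcongr
          · exact biasedExpect_card_avoiders_ge hp0 hp1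
          · exact biasedExpect_indicator_card_lt_le hp0 hp1 hδ
      _ ≤ biasedExpect p f := by
          rw [← biasedExpect_const_mul, ← biasedExpect_sub]
          exact biasedExpect_mono hp0 hp1 hf
  obtain ⟨S, hS⟩ := exists_le_biasedExpect hp0 hp1 f
  have hpos : 0 < f S := lt_of_lt_of_le (by positivity) (hEf.trans hS)
  have hsize : p * m - δ ≤ #S := by
    by_contra h
    simp only [f, if_neg h, lt_self_iff_false] at hpos
  refine ⟨S, hsize, ?_⟩
  simpa only [f, if_pos hsize] using hEf.trans hS

lemma exists_productFree_card_ge (hp0 : 0 ≤ p) (hp1 : p ≤ 1) {δ : ℝ} (hδ : 0 < δ)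
    (hδm : δ ≤ p * Fintype.card X) (hD : 0 < avoiderDensity p δ (Fintype.card X)) :
    ∃ A B : Finset G, (∀ a ∈ A, ∀ b ∈ B, ∀ c ∈ B, a * b ≠ c) ∧
      avoiderDensity p δ (Fintype.card X) * ((p * Fintype.card X - δ) ^ 2 / Fintype.card X) *
          Fintype.card G ^ 3 / Fintype.card X ≤ #A * #B * #B := by
  set m : ℝ := (Fintype.card X : ℝ)
  have hm : 0 < m := pos_of_mul_pos_right (hδ.trans_le hδm) hp0
  obtain ⟨x₀⟩ : Nonempty X := Fintype.card_pos_iff.1 (Nat.cast_pos.1 hm)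
  obtain ⟨S, hS, hA⟩ := exists_card_avoiders_ge (G := G) hp0 hp1 hδ hD
  set d : ℝ := (Nat.card (stabilizer G x₀) : ℝ)
  have hn : (Fintype.card G : ℝ) = m * d := by
    have h := card_group_eq_card_mul_card_stabilizer (G := G) x₀
    rw [Nat.card_eq_fintype_card, Nat.card_eq_fintype_card (α := X)] at h
    simp only [m, d, h, Nat.cast_mul]
  have hB : (#{g : G | g • x₀ ∈ S} : ℝ) = #S * d := by
    simp only [d, card_filter_smul_mem (G := G) x₀ S, Nat.cast_mul]
  refine ⟨avoiders G S, ({g : G | g • x₀ ∈ S} : Finset G), fun a ha b hb c hc =>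
    mul_ne_of_mem_avoiders ha (mem_filter.1 hb).2 (mem_filter.1 hc).2, ?_⟩
  calc avoiderDensity p δ (Fintype.card X) * ((p * m - δ) ^ 2 / m) * Fintype.card G ^ 3 / m
      = Fintype.card G * avoiderDensity p δ (Fintype.card X) * ((p * m - δ) * d) ^ 2 := by
        rw [hn]
        field_simp
    _ ≤ #(avoiders G S) * (#S * d) ^ 2 := by gcongr
    _ = _ := by rw [← hB]; ring

lemma exists_productFree_card_ge_of_sqrt {t : ℝ} (ht0 : 0 < t) (ht1 : t < 1)
    (hX : 0 < Fintype.card X) (hD : 0 < avoiderDensity (√(Fintype.card X))⁻¹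
      (t * √(Fintype.card X)) (Fintype.card X)) :
    ∃ A B : Finset G, (∀ a ∈ A, ∀ b ∈ B, ∀ c ∈ B, a * b ≠ c) ∧
      avoiderDensity (√(Fintype.card X))⁻¹ (t * √(Fintype.card X)) (Fintype.card X) *
          (1 - t) ^ 2 * Fintype.card G ^ 3 / Fintype.card X ≤ #A * #B * #B := by
  set m : ℝ := (Fintype.card X : ℝ)
  have hm : 0 < m := Nat.cast_pos.2 hX
  have hs : 1 ≤ √m := Real.one_le_sqrt.2 (Nat.one_le_cast.2 hX)
  have hpm : (√m)⁻¹ * m = √m := by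
    rw [inv_mul_eq_div, div_eq_iff (by positivity), Real.mul_self_sqrt (by positivity)]
  have hshape : ((√m)⁻¹ * m - t * √m) ^ 2 / m = (1 - t) ^ 2 := by
    rw [hpm, show √m - t * √m = (1 - t) * √m by ring, mul_pow, Real.sq_sqrt hm.le,
      mul_div_cancel_right₀ _ hm.ne']
  rw [← hshape]
  exact exists_productFree_card_ge (by positivity) (inv_le_one_of_one_le₀ hs)
    (by positivity) (by rw [hpm]; nlinarith) hD

end Avoiders

open Filter Topology Real

lemma tendsto_avoiderDensity {t : ℝ} (ht : t ≠ 0) :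
    Tendsto (fun m : ℕ => avoiderDensity (√m)⁻¹ (t * √m) m) atTop (𝓝 (exp (-1))) := by
  have h0 : Tendsto (fun m : ℕ => (√(m : ℝ))⁻¹) atTop (𝓝 0) := by
    have := (continuous_sqrt.tendsto 0).comp
      (tendsto_inv_atTop_zero.comp tendsto_natCast_atTop_atTop)
    simpa [Function.comp_def, sqrt_inv] using this
  have hlim := ((tendsto_const_nhds (x := (1 : ℝ))).sub h0 |>.mul
    (tendsto_one_add_div_pow_exp (-1))).sub (h0.div_const (t ^ 2))
  rw [sub_zero, one_mul, zero_div, sub_zero] at hlim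
  refine hlim.congr' ?_
  filter_upwards [eventually_gt_atTop 0] with m hm
  have hm' : (0 : ℝ) < m := by exact_mod_cast hm
  rw [avoiderDensity, inv_pow, sq_sqrt hm'.le, mul_pow, sq_sqrt hm'.le]
  field_simp
  ring

/-- For every `ε > 0` there is an `M` such that every finite group `G` of
order `n` admitting a transitive action on a finite set of size `m ≥ M`
has subsets `A, B, C` with `B = C`, admitting no true equation `a·b = c`
with `a ∈ A`, `b ∈ B`, `c ∈ C`, and with
`#A · #B · #C ≥ (e⁻¹ − ε) · n³/m`. -/
theorem gowers_bound_near_sharp (ε : ℝ) (hε : 0 < ε) :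
    ∃ M : ℕ, ∀ (G : Type) [Group G] [Fintype G] (X : Type) [Fintype X]
      [MulAction G X], MulAction.IsPretransitive G X → M ≤ Fintype.card X →
      ∃ A B C : Finset G, B = C ∧
        (∀ a ∈ A, ∀ b ∈ B, ∀ c ∈ C, a * b ≠ c) ∧
        (Real.exp (-1) - ε) * (Fintype.card G : ℝ) ^ 3 / Fintype.card X
          ≤ (A.card : ℝ) * B.card * C.card := by
  obtain ⟨t, ht0, ht1, ht⟩ : ∃ t : ℝ, 0 < t ∧ t < 1 ∧ exp (-1) - ε < exp (-1) * (1 - t) ^ 2 := by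
    refine ⟨min ε 1 / 2, by positivity, by linarith [min_le_right ε 1], ?_⟩
    have hexp : exp (-1) < 1 := exp_lt_one_iff.2 (by norm_num)
    nlinarith [exp_pos (-1), min_le_left ε 1, min_le_right ε 1, sq_nonneg (min ε 1 / 2)]
  have hlim : max ((exp (-1) - ε) / (1 - t) ^ 2) 0 < exp (-1) :=
    max_lt ((div_lt_iff₀ (by nlinarith)).2 ht) (exp_pos _)
  obtain ⟨M, hM⟩ := eventually_atTop.1 <|
    ((tendsto_avoiderDensity ht0.ne').eventually (lt_mem_nhds hlim)).and (eventually_gt_atTop 0)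
  refine ⟨M, fun G _ _ X _ _ _ hXM => ?_⟩
  classical
  obtain ⟨hD, hX⟩ := hM _ hXM
  rw [max_lt_iff, div_lt_iff₀ (by nlinarith)] at hD
  obtain ⟨A, B, hfree, hcard⟩ := exists_productFree_card_ge_of_sqrt (G := G) ht0 ht1 hX hD.2
  exact ⟨A, B, B, rfl, hfree, le_trans (by gcongr; exact hD.1.le) hcard⟩
end
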